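/- arXiv:2310.11285 — 8 statements merged into one kernel-verified Lean document; each statement's English description precedes it below -/
import Mathlib

section
/- Let U, V be k-dimensional subspaces of F_q^n with U = rowspace(A) and V = rowspace(B), where A, B are k × n matrices over F_q in reduced row echelon form. Then d_S(U, V) ≥ d_H(v(A), v(B)), where d_H denotes Hamming distance. -/
open Module

/-- The subspace distance `d_S(U,V) = dim U + dim V - 2 dim (U ⊓ V)`. -/
noncomputable def subDist {F : Type*} [Field F] {n : ℕ}
    (U V : Submodule F (Fin n → F)) : ℕ :=
  finrank F U + finrank F V - 2 * finrank F (U ⊓ V : Submodule F (Fin n → F))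

/-- `A` is a `k × n` matrix in reduced row echelon form with pivot (leading one)
of row `i` in column `p i`: the pivots move strictly to the right, each pivot entry
is `1` and is the first nonzero entry of its row, and each pivot is the only
nonzero entry in its column. -/
def IsRREF {F : Type*} [Field F] {k n : ℕ}
    (A : Matrix (Fin k) (Fin n) F) (p : Fin k → Fin n) : Prop :=
  StrictMono p ∧ (∀ i, A i (p i) = 1) ∧ (∀ i j, j < p i → A i j = 0) ∧
    (∀ i i', i' ≠ i → A i' (p i) = 0)

/-- The identifying vector of a matrix in RREF with pivot columns `p`,
as a Boolean vector of length `n` whose `1`s are exactly at the pivot positions. -/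
def identifyingVector {k n : ℕ} (p : Fin k → Fin n) : Fin n → Bool :=
  fun j => decide (∃ i, p i = j)

noncomputable def leadSet {F : Type*} [Field F] {n : ℕ} (W : Submodule F (Fin n → F)) :
    Finset (Fin n) := by
  classical
  exact Finset.univ.filter fun j => ∃ w ∈ W, w j ≠ 0 ∧ ∀ j' < j, w j' = 0

lemma mem_leadSet {F : Type*} [Field F] {n : ℕ} {W : Submodule F (Fin n → F)} {j : Fin n} :
    j ∈ leadSet W ↔ ∃ w ∈ W, w j ≠ 0 ∧ ∀ j' < j, w j' = 0 := by
  classical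
  simp [leadSet]

lemma leadSet_mono {F : Type*} [Field F] {n : ℕ} {W W' : Submodule F (Fin n → F)}
    (h : W ≤ W') : leadSet W ⊆ leadSet W' := by
  intro j hj
  rw [mem_leadSet] at hj ⊢
  obtain ⟨w, hw, h1, h2⟩ := hj
  exact ⟨w, h hw, h1, h2⟩

lemma finrank_le_card_leadSet {F : Type*} [Field F] {n : ℕ} (W : Submodule F (Fin n → F)) :
    finrank F W ≤ (leadSet W).card := by
  classical
  have hinj : Function.Injective
      ((LinearMap.funLeft F F (fun j : leadSet W => (j : Fin n))).comp W.subtype) := by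
    rw [← LinearMap.ker_eq_bot, LinearMap.ker_eq_bot']
    intro w hw
    ext j
    by_contra hne
    have hsupp : (Finset.univ.filter fun j => (w : Fin n → F) j ≠ 0).Nonempty :=
      ⟨j, by simpa using hne⟩
    set j0 := (Finset.univ.filter fun j => (w : Fin n → F) j ≠ 0).min' hsupp with hj0
    have hj0mem := (Finset.univ.filter fun j => (w : Fin n → F) j ≠ 0).min'_mem hsupp
    have hj0ne : (w : Fin n → F) j0 ≠ 0 := by simpa using hj0mem
    have hj0lt : ∀ j' < j0, (w : Fin n → F) j' = 0 := by
      intro j' hj'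
      by_contra h'
      exact absurd (Finset.min'_le _ j' (by simpa using h')) (not_le.2 hj')
    have hj0lead : j0 ∈ leadSet W := mem_leadSet.2 ⟨w, w.2, hj0ne, hj0lt⟩
    exact hj0ne (congrFun hw ⟨j0, hj0lead⟩)
  have h := LinearMap.finrank_le_finrank_of_injective hinj
  simpa [finrank_fintype_fun_eq_card, Fintype.card_coe] using h

lemma rref_lead_subset {F : Type*} [Field F] {k n : ℕ}
    {A : Matrix (Fin k) (Fin n) F} {pA : Fin k → Fin n} (hA : IsRREF A pA) :
    leadSet (Submodule.span F (Set.range fun i => A i)) ⊆ Finset.image pA Finset.univ := by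
  classical
  intro j hj
  rw [mem_leadSet] at hj
  obtain ⟨w, hw, hwj, hlt⟩ := hj
  rw [Submodule.mem_span_range_iff_exists_fun] at hw
  obtain ⟨c, hc⟩ := hw
  have hwval : ∀ j', w j' = ∑ i, c i * A i j' := by
    intro j'
    rw [← hc]
    simp [Finset.sum_apply]
  have hcne : (Finset.univ.filter fun i => c i ≠ 0).Nonempty := by
    by_contra h
    rw [Finset.not_nonempty_iff_eq_empty, Finset.filter_eq_empty_iff] at h
    apply hwj
    rw [hwval]
    exact Finset.sum_eq_zero fun i _ => by
      rw [not_not.1 (h (Finset.mem_univ i)), zero_mul]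
  set i0 := (Finset.univ.filter fun i => c i ≠ 0).min' hcne with hi0
  have hci0 : c i0 ≠ 0 := by
    have := (Finset.univ.filter fun i => c i ≠ 0).min'_mem hcne
    simpa using this
  have hmin : ∀ i, c i ≠ 0 → i0 ≤ i := fun i hi =>
    Finset.min'_le _ i (by simpa using hi)
  have hzero : ∀ j' < pA i0, w j' = 0 := by
    intro j' hj'
    rw [hwval]
    apply Finset.sum_eq_zero
    intro i _
    by_cases hci : c i = 0
    · rw [hci, zero_mul]
    · have : pA i0 ≤ pA i := hA.1.monotone (hmin i hci)
      rw [hA.2.2.1 i j' (lt_of_lt_of_le hj' this), mul_zero]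
  have hwp : w (pA i0) = c i0 := by
    rw [hwval, Finset.sum_eq_single i0]
    · rw [hA.2.1 i0, mul_one]
    · intro i _ hne
      rw [hA.2.2.2 i0 i hne, mul_zero]
    · intro h; exact absurd (Finset.mem_univ i0) h
  rcases lt_trichotomy j (pA i0) with h | h | h
  · exact absurd (hzero j h) hwj
  · exact Finset.mem_image.2 ⟨i0, Finset.mem_univ _, h.symm⟩
  · exact absurd (hlt _ h) (by rw [hwp]; exact hci0)

lemma rref_linearIndependent {F : Type*} [Field F] {k n : ℕ}
    {A : Matrix (Fin k) (Fin n) F} {pA : Fin k → Fin n} (hA : IsRREF A pA) :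
    LinearIndependent F (fun i => A i) := by
  rw [Fintype.linearIndependent_iff]
  intro g hg i
  have h := congrFun hg (pA i)
  simp only [Finset.sum_apply, Pi.smul_apply, smul_eq_mul, Pi.zero_apply] at h
  rwa [Finset.sum_eq_single i (fun i' _ hne => by rw [hA.2.2.2 i i' hne, mul_zero])
    (fun h' => absurd (Finset.mem_univ i) h'), hA.2.1 i, mul_one] at h

theorem stmt_2 {F : Type*} [Field F] [Fintype F] {k n : ℕ}
    (A B : Matrix (Fin k) (Fin n) F) (pA pB : Fin k → Fin n)
    (hA : IsRREF A pA) (hB : IsRREF B pB)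
    (U V : Submodule F (Fin n → F))
    (hU : U = Submodule.span F (Set.range fun i => A i))
    (hV : V = Submodule.span F (Set.range fun i => B i)) :
    hammingDist (identifyingVector pA) (identifyingVector pB) ≤ subDist U V := by
  classical
  set PA := Finset.image pA Finset.univ with hPAdef
  set PB := Finset.image pB Finset.univ with hPBdef
  have hPAcard : PA.card = k := by
    rw [hPAdef, Finset.card_image_of_injective _ hA.1.injective, Finset.card_univ,
      Fintype.card_fin]
  have hPBcard : PB.card = k := by
    rw [hPBdef, Finset.card_image_of_injective _ hB.1.injective, Finset.card_univ,
      Fintype.card_fin]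
  -- Hamming distance computation
  have hham : hammingDist (identifyingVector pA) (identifyingVector pB)
      = ((PA \ PB) ∪ (PB \ PA)).card := by
    have : hammingDist (identifyingVector pA) (identifyingVector pB)
        = (Finset.univ.filter fun j => identifyingVector pA j ≠ identifyingVector pB j).card := by
      rw [hammingDist]
    rw [this]
    congr 1
    ext j
    simp only [Finset.mem_filter, Finset.mem_univ, true_and, identifyingVector,
      Finset.mem_union, Finset.mem_sdiff, hPAdef, hPBdef, Finset.mem_image,
      Finset.mem_univ, ne_eq, decide_eq_decide]
    tauto
  have hdisj : Disjoint (PA \ PB) (PB \ PA) :=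
    Finset.disjoint_left.2 fun a ha hb =>
      (Finset.mem_sdiff.1 ha).2 (Finset.mem_sdiff.1 hb).1
  rw [hham, Finset.card_union_of_disjoint hdisj]
  -- ranks
  have hU' : finrank F U = k := by
    have h := finrank_span_eq_card (R := F) (rref_linearIndependent hA)
    rw [hU, h, Fintype.card_fin]
  have hV' : finrank F V = k := by
    have h := finrank_span_eq_card (R := F) (rref_linearIndependent hB)
    rw [hV, h, Fintype.card_fin]
  have hinter : finrank F (U ⊓ V : Submodule F (Fin n → F)) ≤ (PA ∩ PB).card := by
    refine le_trans (finrank_le_card_leadSet _) (Finset.card_le_card ?_)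
    intro j hj
    rw [Finset.mem_inter]
    constructor
    · exact rref_lead_subset hA (leadSet_mono (le_trans inf_le_left (le_of_eq hU)) hj)
    · exact rref_lead_subset hB (leadSet_mono (le_trans inf_le_right (le_of_eq hV)) hj)
  have h1 : (PA ∩ PB).card + (PA \ PB).card = PA.card := Finset.card_inter_add_card_sdiff _ _
  have h2 : (PB ∩ PA).card + (PB \ PA).card = PB.card := Finset.card_inter_add_card_sdiff _ _
  rw [Finset.inter_comm] at h2
  rw [subDist, hU', hV']
  omega
end

section
/- Let U, V be k-dimensional subspaces of F_q^n with U = rowspace(A) and V = rowspace(B), where A, B are k × n matrices over F_q in inverse reduced row echelon form. Then d_S(U, V) ≥ d_H(v̂(A), v̂(B)), where d_H denotes Hamming distance. -/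
open Module

/-- `A` is a `k × n` matrix in inverse reduced row echelon form with pivot (leading one)
of row `i` in column `p i`: the pivots move strictly to the left, each pivot entry
is `1` and is the first nonzero entry of its row, and each pivot is the only
nonzero entry in its column. -/
def IsInvRREF {F : Type*} [Field F] {k n : ℕ}
    (A : Matrix (Fin k) (Fin n) F) (p : Fin k → Fin n) : Prop :=
  StrictAnti p ∧ (∀ i, A i (p i) = 1) ∧ (∀ i j, j < p i → A i j = 0) ∧
    (∀ i i', i' ≠ i → A i' (p i) = 0)

lemma pivot_of_mem {F : Type*} [Field F] {k n : ℕ}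
    {A : Matrix (Fin k) (Fin n) F} {p : Fin k → Fin n} (hA : IsInvRREF A p)
    {x : Fin n → F} (hx : x ∈ Submodule.span F (Set.range fun i => A i))
    (hx0 : x ≠ 0) :
    ∃ j : Fin n, x j ≠ 0 ∧ (∀ j' < j, x j' = 0) ∧ ∃ i, p i = j := by
  classical
  rw [Submodule.mem_span_range_iff_exists_fun] at hx
  obtain ⟨c, hc⟩ := hx
  have hs : (Finset.univ.filter fun i => c i ≠ 0).Nonempty := by
    by_contra h
    rw [Finset.not_nonempty_iff_eq_empty, Finset.filter_eq_empty_iff] at h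
    apply hx0
    rw [← hc]
    ext j
    simp only [Finset.sum_apply, Pi.smul_apply, smul_eq_mul, Pi.zero_apply]
    refine Finset.sum_eq_zero fun i hi => ?_
    rw [not_not.mp (h hi), zero_mul]
  set i0 := (Finset.univ.filter fun i => c i ≠ 0).max' hs with hi0
  have hi0mem := (Finset.univ.filter fun i => c i ≠ 0).max'_mem hs
  rw [Finset.mem_filter] at hi0mem
  refine ⟨p i0, ?_, ?_, ⟨i0, rfl⟩⟩
  · rw [← hc]
    simp only [Finset.sum_apply, Pi.smul_apply, smul_eq_mul]
    rw [Finset.sum_eq_single i0 (fun i' _ hne => by rw [hA.2.2.2 i0 i' hne, mul_zero])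
      (by simp), hA.2.1 i0, mul_one]
    exact hi0mem.2
  · intro j' hj'
    rw [← hc]
    simp only [Finset.sum_apply, Pi.smul_apply, smul_eq_mul]
    refine Finset.sum_eq_zero fun i _ => ?_
    by_cases hci : c i = 0
    · rw [hci, zero_mul]
    · have hile : i ≤ i0 := Finset.le_max' _ i (Finset.mem_filter.mpr ⟨Finset.mem_univ i, hci⟩)
      have : p i0 ≤ p i := hA.1.antitone hile
      rw [hA.2.2.1 i j' (lt_of_lt_of_le hj' this), mul_zero]

lemma rows_li {F : Type*} [Field F] {k n : ℕ}
    {A : Matrix (Fin k) (Fin n) F} {p : Fin k → Fin n} (hA : IsInvRREF A p) :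
    LinearIndependent F (fun i => A i) := by
  rw [Fintype.linearIndependent_iff]
  intro c hc i
  have := congrFun hc (p i)
  simp only [Finset.sum_apply, Pi.smul_apply, smul_eq_mul, Pi.zero_apply] at this
  rwa [Finset.sum_eq_single i (fun i' _ hne => by rw [hA.2.2.2 i i' hne, mul_zero])
    (by simp), hA.2.1 i, mul_one] at this


set_option maxHeartbeats 1000000 in
theorem stmt_3 {F : Type*} [Field F] [Fintype F] {k n : ℕ}
    (A B : Matrix (Fin k) (Fin n) F) (pA pB : Fin k → Fin n)
    (hA : IsInvRREF A pA) (hB : IsInvRREF B pB)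
    (U V : Submodule F (Fin n → F))
    (hU : U = Submodule.span F (Set.range fun i => A i))
    (hV : V = Submodule.span F (Set.range fun i => B i)) :
    hammingDist (identifyingVector pA) (identifyingVector pB) ≤ subDist U V := by

  classical
  set SA : Finset (Fin n) := Finset.univ.image pA with hSA
  set SB : Finset (Fin n) := Finset.univ.image pB with hSB
  set S : Finset (Fin n) := SA ∩ SB with hS
  -- cardinalities
  have hcSA : SA.card = k := by
    rw [hSA, Finset.card_image_of_injective _ hA.1.injective, Finset.card_univ, Fintype.card_fin]
  have hcSB : SB.card = k := by
    rw [hSB, Finset.card_image_of_injective _ hB.1.injective, Finset.card_univ, Fintype.card_fin]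
  -- ranks of U and V
  have hliA := rows_li hA
  have hliB := rows_li hB
  have hrU : finrank F U = k := by
    rw [hU, finrank_span_eq_card hliA, Fintype.card_fin]
  have hrV : finrank F V = k := by
    rw [hV, finrank_span_eq_card hliB, Fintype.card_fin]
  -- key vanishing fact
  have key : ∀ x ∈ U ⊓ V, (∀ j ∈ S, x j = 0) → x = 0 := by
    intro x hx hvan
    by_contra hx0
    obtain ⟨jA, hjA1, hjA2, iA, hiA⟩ := pivot_of_mem hA (hU ▸ hx.1) hx0
    obtain ⟨jB, hjB1, hjB2, iB, hiB⟩ := pivot_of_mem hB (hV ▸ hx.2) hx0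
    have hjj : jA = jB := by
      rcases lt_trichotomy jA jB with h | h | h
      · exact absurd (hjB2 jA h) hjA1
      · exact h
      · exact absurd (hjA2 jB h) hjB1
    apply hjA1
    apply hvan
    rw [hS, Finset.mem_inter]
    exact ⟨Finset.mem_image.mpr ⟨iA, Finset.mem_univ _, hiA⟩,
      Finset.mem_image.mpr ⟨iB, Finset.mem_univ _, hjj ▸ hiB⟩⟩
  -- dim (U ⊓ V) ≤ card S via the restriction map
  have hdim : finrank F (U ⊓ V : Submodule F (Fin n → F)) ≤ S.card := by
    let f : (U ⊓ V : Submodule F (Fin n → F)) →ₗ[F] ({ j : Fin n // j ∈ S } → F) :=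
      (LinearMap.pi fun j : S => LinearMap.proj (j : Fin n)).comp (U ⊓ V).subtype
    have hf : Function.Injective f := by
      rw [← LinearMap.ker_eq_bot, LinearMap.ker_eq_bot']
      intro x hxf
      ext1
      refine key x.1 x.2 fun j hj => ?_
      exact congrFun hxf ⟨j, hj⟩
    calc finrank F (U ⊓ V : Submodule F (Fin n → F))
        ≤ finrank F ({ j : Fin n // j ∈ S } → F) := LinearMap.finrank_le_finrank_of_injective hf
      _ = S.card := by rw [Module.finrank_fintype_fun_eq_card, Fintype.card_coe]
  have hdimk : finrank F (U ⊓ V : Submodule F (Fin n → F)) ≤ k := by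
    rw [← hrU]
    exact Submodule.finrank_mono inf_le_left
  -- hamming distance = card of symmetric difference
  have hham : hammingDist (identifyingVector pA) (identifyingVector pB) = (symmDiff SA SB).card := by
    rw [hammingDist]
    congr 1
    ext j
    simp only [Finset.mem_filter, Finset.mem_univ, true_and, Finset.mem_symmDiff,
      identifyingVector, ne_eq, decide_eq_decide, hSA, hSB, Finset.mem_image,
      Finset.mem_univ, true_and]
    tauto
  have h1 : (SA \ SB).card + (SA ∩ SB).card = SA.card := Finset.card_sdiff_add_card_inter SA SB
  have h2 : (SB \ SA).card + (SB ∩ SA).card = SB.card := Finset.card_sdiff_add_card_inter SB SA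
  have h3 : (symmDiff SA SB).card = (SA \ SB).card + (SB \ SA).card := by
    rw [symmDiff_def, Finset.sup_eq_union, Finset.card_union_of_disjoint (disjoint_sdiff_sdiff)]
  have h4 : (SB ∩ SA).card = S.card := by rw [hS, Finset.inter_comm]
  have h5 : (SA ∩ SB).card = (SB ∩ SA).card := by rw [Finset.inter_comm]
  rw [subDist, hrU, hrV, hham]
  omega
end

section
/- Let q be a prime power and let m, n, δ be positive integers with δ ≤ min{m, n}. Then there exists an [m × n, δ]_q maximum rank-metric code, i.e., an F_q-linear subspace of the space of m × n matrices over F_q of dimension max{m,n}·(min{m,n} − δ + 1) in which every nonzero matrix has rank at least δ. -/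
/-!
For `n ≤ m`, view `F^m` as the degree `m` extension `K` of `F = 𝔽_q` and take the Gabidulin
code: the maps `x ↦ ∑_{i<k} aᵢ x^(q^i)` with `k = n - δ + 1` and `aᵢ ∈ K`, restricted to an
`n`-dimensional `F`-subspace of `K`. These maps are `F`-linear, and for `a ≠ 0` the kernel
consists of roots of a nonzero polynomial of degree at most `q^(k-1)`, so it has `F`-dimension
at most `k - 1`. Hence every nonzero codeword has rank at least `n - (k - 1) = δ`; in particular
the coefficients `a` determine the codeword, so the code has dimension `m * k`. The case `m < n`
follows by transposition.
-/

open Module Polynomial FiniteField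

section LinearizedPoly

variable {K : Type*} {k : ℕ}

noncomputable def linearizedPoly [Semiring K] (q : ℕ) (a : Fin k → K) : K[X] :=
  ∑ i : Fin k, monomial (q ^ (i : ℕ)) (a i)

theorem coeff_linearizedPoly [Semiring K] {q : ℕ} (hq : 1 < q) (a : Fin k → K) (j : Fin k) :
    (linearizedPoly q a).coeff (q ^ (j : ℕ)) = a j := by
  simp [linearizedPoly, finsetSum_coeff, coeff_monomial, (Nat.pow_right_injective hq).eq_iff,
    Fin.val_inj]

theorem linearizedPoly_ne_zero [Semiring K] {q : ℕ} (hq : 1 < q) {a : Fin k → K} (ha : a ≠ 0) :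
    linearizedPoly q a ≠ 0 := by
  obtain ⟨j, hj⟩ := Function.ne_iff.mp ha
  exact fun h ↦ hj <| by simpa [h] using (coeff_linearizedPoly hq a j).symm

theorem natDegree_linearizedPoly_le [Semiring K] {q : ℕ} (hq : 0 < q) (a : Fin k → K) :
    (linearizedPoly q a).natDegree ≤ q ^ (k - 1) :=
  natDegree_sum_le_of_forall_le _ _ fun i _ ↦ (natDegree_monomial_le _).trans <|
    Nat.pow_le_pow_right hq (by omega)

@[simp]
theorem eval_linearizedPoly [CommSemiring K] (q : ℕ) (a : Fin k → K) (x : K) :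
    (linearizedPoly q a).eval x = ∑ i, a i * x ^ q ^ (i : ℕ) := by
  simp [linearizedPoly, eval_finsetSum]

end LinearizedPoly

section LinearizedMap

variable (F : Type*) {K : Type*} [Field F] [Fintype F] [Field K] [Algebra F K]

noncomputable def linearizedMap (k : ℕ) : (Fin k → K) →ₗ[F] Module.End F K :=
  (Fintype.linearCombination K fun i : Fin k ↦
    (frobeniusAlgHom F K).toLinearMap ^ (i : ℕ)).restrictScalars F

variable {F}

theorem linearizedMap_apply {k : ℕ} (a : Fin k → K) (x : K) :
    linearizedMap F k a x = (linearizedPoly (Fintype.card F) a).eval x := by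
  simp [linearizedMap, Fintype.linearCombination_apply, Module.End.coe_pow, coe_frobeniusAlgHom,
    pow_iterate]

theorem finrank_ker_linearizedMap_le [Finite K] {k : ℕ} {a : Fin k → K} (ha : a ≠ 0) :
    finrank F (LinearMap.ker (linearizedMap F k a)) ≤ k - 1 := by
  have hq : 1 < Fintype.card F := Fintype.one_lt_card
  set P := linearizedPoly (Fintype.card F) a
  have hroots : (LinearMap.ker (linearizedMap F k a) : Set K) ⊆ P.rootSet K := by
    intro x hx
    rw [mem_rootSet_of_ne (linearizedPoly_ne_zero hq ha), coe_aeval_eq_eval,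
      ← linearizedMap_apply]
    exact hx
  have hcard : Nat.card (LinearMap.ker (linearizedMap F k a)) ≤ Fintype.card F ^ (k - 1) :=
    calc Nat.card (LinearMap.ker (linearizedMap F k a))
        _ = Set.ncard (LinearMap.ker (linearizedMap F k a) : Set K) := Nat.card_coe_set_eq _
        _ ≤ Set.ncard (P.rootSet K) := Set.ncard_le_ncard hroots (rootSet_finite _ _)
        _ ≤ P.natDegree := ncard_rootSet_le _ _
        _ ≤ Fintype.card F ^ (k - 1) := natDegree_linearizedPoly_le (by omega) a
  rw [Module.natCard_eq_pow_finrank (K := F), Nat.card_eq_fintype_card] at hcard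
  exact (Nat.pow_le_pow_iff_right hq).mp hcard

end LinearizedMap

theorem LinearMap.rank_toMatrix {R M N ι κ : Type*} [CommRing R] [AddCommGroup M] [AddCommGroup N]
    [Module R M] [Module R N] [Fintype ι] [Fintype κ] [DecidableEq ι] (b : Basis ι R M)
    (c : Basis κ R N) (f : M →ₗ[R] N) :
    (LinearMap.toMatrix b c f).rank = finrank R (LinearMap.range f) := by
  rw [Matrix.rank_eq_finrank_range_toLin _ c b, Matrix.toLin_toMatrix]

theorem LinearMap.finrank_ker_comp_le {R L M N : Type*} [DivisionRing R] [AddCommGroup L]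
    [AddCommGroup M] [AddCommGroup N] [Module R L] [Module R M] [Module R N]
    [FiniteDimensional R M] (f : M →ₗ[R] N) {g : L →ₗ[R] M} (hg : Function.Injective g) :
    finrank R (LinearMap.ker (f ∘ₗ g)) ≤ finrank R (LinearMap.ker f) :=
  calc finrank R (LinearMap.ker (f ∘ₗ g))
      _ = finrank R ((LinearMap.ker (f ∘ₗ g)).map g) :=
        (Submodule.equivMapOfInjective g hg _).finrank_eq
      _ ≤ finrank R (LinearMap.ker f) := by
        rw [LinearMap.ker_comp]
        exact Submodule.finrank_mono (Submodule.map_comap_le _ _)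
def MinRankDistanceGE {R ι κ : Type*} [CommRing R] [Fintype κ]
    (C : Submodule R (Matrix ι κ R)) (δ : ℕ) : Prop :=
  ∀ A ∈ C, A ≠ 0 → δ ≤ A.rank

theorem MinRankDistanceGE.map_transpose {R ι κ : Type*} [Field R] [Fintype ι] [Fintype κ]
    {C : Submodule R (Matrix ι κ R)} {δ : ℕ} (hC : MinRankDistanceGE C δ) :
    MinRankDistanceGE (C.map (Matrix.transposeLinearEquiv ι κ R R).toLinearMap) δ := by
  rintro _ ⟨A, hA, rfl⟩ hA0
  have hA0 : A ≠ 0 := by rintro rfl; simp at hA0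
  simpa using hC A hA hA0

theorem exists_gabidulin_code {F : Type*} (K : Type*) [Field F] [Fintype F] [Field K] [Finite K]
    [Algebra F K] {m n δ : ℕ} (hK : finrank F K = m) (hδ : 0 < δ) (hδn : δ ≤ n) (hnm : n ≤ m) :
    ∃ C : Submodule F (Matrix (Fin m) (Fin n) F),
      finrank F C = m * (n - δ + 1) ∧ MinRankDistanceGE C δ := by
  obtain ⟨v, hv⟩ := exists_linearIndependent_of_le_finrank (R := F) (hK ▸ hnm : n ≤ finrank F K)
  let ι := Fintype.linearCombination F v
  have hι : Function.Injective ι := hv.fintypeLinearCombination_injective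
  let b := finBasisOfFinrankEq F K hK
  let Θ : (Fin (n - δ + 1) → K) →ₗ[F] Matrix (Fin m) (Fin n) F :=
    (LinearMap.toMatrix (Pi.basisFun F (Fin n)) b).toLinearMap ∘ₗ LinearMap.lcomp F K ι ∘ₗ
      linearizedMap F _
  have hrank : ∀ a ≠ 0, δ ≤ (Θ a).rank := by
    intro a ha
    have hker := (LinearMap.finrank_ker_comp_le _ hι).trans
      (finrank_ker_linearizedMap_le ha)
    have hsum := (linearizedMap F _ a ∘ₗ ι).finrank_range_add_finrank_ker
    rw [finrank_fin_fun] at hsum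
    show δ ≤ (LinearMap.toMatrix _ b (linearizedMap F _ a ∘ₗ ι)).rank
    rw [LinearMap.rank_toMatrix]
    omega
  have hΘ : Function.Injective Θ := by
    refine (injective_iff_map_eq_zero Θ).mpr fun a h ↦ ?_
    by_contra ha
    have := hrank a ha
    rw [h, Matrix.rank_zero] at this
    omega
  refine ⟨LinearMap.range Θ, ?_, ?_⟩
  · rw [LinearMap.finrank_range_of_inj hΘ, finrank_pi_fintype]
    simp [hK, mul_comm]
  · rintro _ ⟨a, rfl⟩ hA
    exact hrank a (by rintro rfl; simp at hA)

theorem stmt_4_general {F : Type*} [Field F] [Fintype F] (m n δ : ℕ)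
    (hδ : 0 < δ) (hδmn : δ ≤ min m n) :
    ∃ C : Submodule F (Matrix (Fin m) (Fin n) F),
      finrank F C = max m n * (min m n - δ + 1) ∧
      ∀ A ∈ C, A ≠ 0 → δ ≤ A.rank := by
  wlog hnm : n ≤ m generalizing m n
  · obtain ⟨C, hCdim, hCrank⟩ := this n m (min_comm m n ▸ hδmn) (by omega)
    exact ⟨C.map (Matrix.transposeLinearEquiv (Fin n) (Fin m) F F).toLinearMap,
      by rw [LinearEquiv.finrank_map_eq, hCdim, max_comm, min_comm],
      MinRankDistanceGE.map_transpose hCrank⟩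
  obtain ⟨p, _⟩ := CharP.exists F
  have : Fact p.Prime := ⟨CharP.char_is_prime F p⟩
  have : NeZero m := ⟨by omega⟩
  obtain ⟨C, hCdim, hCrank⟩ := exists_gabidulin_code (Extension F p m) (finrank_extension F p m)
    hδ (by omega) hnm
  exact ⟨C, by rw [hCdim, max_eq_left hnm, min_eq_right hnm], hCrank⟩

theorem stmt_4 {F : Type*} [Field F] [Fintype F] (m n δ : ℕ)
    (hm : 0 < m) (hn : 0 < n) (hδ : 0 < δ) (hδmn : δ ≤ min m n) :
    ∃ C : Submodule F (Matrix (Fin m) (Fin n) F),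
      finrank F C = max m n * (min m n - δ + 1) ∧
      ∀ A ∈ C, A ≠ 0 → δ ≤ A.rank :=
  stmt_4_general m n δ hδ hδmn
end

section
/- Any F_q-linear subspace C of the space of m × n matrices over F_q in which every nonzero matrix has rank at least δ satisfies dim_{F_q}(C) ≤ max{m, n}·(min{m, n} − δ + 1). -/
/-!
A nonzero matrix whose nonzero rows all lie among `δ - 1` fixed rows has rank below `δ`,
so deleting those rows is injective on `C`; this embeds `C` into the matrices with
`m - δ + 1` rows. Transposing gives the same bound with the roles of `m` and `n` swapped.
-/

open Module

section

open Matrix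

variable {F : Type*} [Field F] {m n : Type*} [Fintype m] [Fintype n]

theorem Matrix.rank_le_card_of_row_eq_zero (A : Matrix m n F) (s : Finset m)
    (hA : ∀ i ∉ s, A i = 0) : A.rank ≤ s.card := by
  classical
  have hrows : Set.range A.row ⊆ Submodule.span F (s.image A : Set (n → F)) := by
    rintro _ ⟨i, rfl⟩
    by_cases hi : i ∈ s
    · exact Submodule.subset_span (Finset.mem_coe.2 (Finset.mem_image_of_mem A hi))
    · simp [row, hA i hi]
  calc A.rank = finrank F (Submodule.span F (Set.range A.row)) := A.rank_eq_finrank_span_row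
    _ ≤ finrank F (Submodule.span F (s.image A : Set (n → F))) :=
        Submodule.finrank_mono (Submodule.span_le.2 hrows)
    _ ≤ (s.image A).card := finrank_span_finset_le_card _
    _ ≤ s.card := Finset.card_image_le

theorem finrank_le_of_card_lt_rank (C : Submodule F (Matrix m n F)) (s : Finset m)
    (hC : ∀ A ∈ C, A ≠ 0 → s.card < A.rank) :
    finrank F C ≤ (Fintype.card m - s.card) * Fintype.card n := by
  classical
  let deleteRows : Matrix m n F →ₗ[F] Matrix {i // i ∉ s} n F :=
    LinearMap.funLeft F (n → F) Subtype.val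
  have hinj : Function.Injective (deleteRows ∘ₗ C.subtype) := by
    rw [← LinearMap.ker_eq_bot, Submodule.eq_bot_iff]
    rintro ⟨A, hAC⟩ hA
    by_contra hA0
    have hrows : ∀ i ∉ s, A i = 0 := fun i hi => congrFun hA ⟨i, hi⟩
    exact (hC A hAC (by simpa using hA0)).not_ge (A.rank_le_card_of_row_eq_zero s hrows)
  calc finrank F C ≤ finrank F (Matrix {i // i ∉ s} n F) :=
        LinearMap.finrank_le_finrank_of_injective hinj
    _ = (Fintype.card m - s.card) * Fintype.card n := by
        rw [finrank_matrix]
        simp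

theorem singleton_bound_rows (C : Submodule F (Matrix m n F)) (δ : ℕ)
    (hC : ∀ A ∈ C, A ≠ 0 → δ ≤ A.rank) :
    finrank F C ≤ Fintype.card n * (Fintype.card m - δ + 1) := by
  rcases Nat.eq_zero_or_pos δ with rfl | hδ
  · calc finrank F C ≤ finrank F (Matrix m n F) := Submodule.finrank_le C
      _ ≤ Fintype.card n * (Fintype.card m - 0 + 1) := by
        rw [finrank_matrix, finrank_self, mul_one, mul_comm]
        gcongr
        omega
  obtain ⟨s, -, hs⟩ := (Finset.univ : Finset m).exists_subset_card_eq
    (min_le_right (δ - 1) (Fintype.card m))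
  have hsC : ∀ A ∈ C, A ≠ 0 → s.card < A.rank := fun A hA hA0 =>
    (hC A hA hA0).trans_lt' (by omega)
  calc finrank F C ≤ (Fintype.card m - s.card) * Fintype.card n :=
        finrank_le_of_card_lt_rank C s hsC
    _ ≤ Fintype.card n * (Fintype.card m - δ + 1) := by
      rw [mul_comm]
      gcongr
      omega

theorem singleton_bound_cols (C : Submodule F (Matrix m n F)) (δ : ℕ)
    (hC : ∀ A ∈ C, A ≠ 0 → δ ≤ A.rank) :
    finrank F C ≤ Fintype.card m * (Fintype.card n - δ + 1) := by
  let e := transposeLinearEquiv m n F F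
  rw [(e.submoduleMap C).finrank_eq]
  refine singleton_bound_rows _ δ ?_
  rintro _ ⟨A, hA, rfl⟩ hA0
  change δ ≤ Aᵀ.rank
  rw [rank_transpose]
  exact hC A hA (by rintro rfl; exact hA0 (map_zero e))

end

theorem stmt_5_general {F : Type*} [Field F] (m n δ : ℕ)
    (C : Submodule F (Matrix (Fin m) (Fin n) F))
    (hC : ∀ A ∈ C, A ≠ 0 → δ ≤ A.rank) :
    finrank F C ≤ max m n * (min m n - δ + 1) := by
  rcases le_total m n with hmn | hnm
  · simpa [max_eq_right hmn, min_eq_left hmn] using singleton_bound_rows C δ hC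
  · simpa [max_eq_left hnm, min_eq_right hnm] using singleton_bound_cols C δ hC

theorem stmt_5 {F : Type*} [Field F] [Fintype F] (m n δ : ℕ)
    (C : Submodule F (Matrix (Fin m) (Fin n) F))
    (hC : ∀ A ∈ C, A ≠ 0 → δ ≤ A.rank) :
    finrank F C ≤ max m n * (min m n - δ + 1) :=
  stmt_5_general m n δ C hC
end

section
/- Let U, V be k-dimensional subspaces of F_q^n with U = rowspace(A) and V = rowspace(B), where A, B are k × n matrices over F_q in reduced row echelon form. If the identifying vectors satisfy v(A) = v(B), then d_S(U, V) = 2·d_R(C_A, C_B), where C_A and C_B denote the k × (n − k) submatrices of A and B obtained by deleting the pivot columns, and d_R denotes rank distance. -/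
open Module

/-- The rank distance `d_R(A,B) = rank (A - B)`. -/
noncomputable def rankDist {F : Type*} [Field F] {m n : ℕ}
    (A B : Matrix (Fin m) (Fin n) F) : ℕ :=
  (A - B).rank

/-! Equal identifying vectors mean that `A` and `B` share their pivot columns `p`, and for a
matrix in RREF the entry of `y ᵥ* A` in column `p i` is `y i`. So a vector lying in both row
spaces is `y ᵥ* A = y ᵥ* B` for a single `y`, which identifies `U ⊓ V` with the kernel of
`y ↦ y ᵥ* (A - B)`; rank–nullity gives `dim (U ⊓ V) = k - rank (A - B)`. Finally `A - B`
vanishes on the pivot columns, so its rank is that of `C_A - C_B`. -/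

open Matrix

lemma eq_of_identifyingVector_eq {k n : ℕ} {p p' : Fin k → Fin n} (hp : StrictMono p)
    (hp' : StrictMono p') (h : identifyingVector p = identifyingVector p') : p = p' :=
  (hp.range_inj hp').1 <| Set.ext fun j ↦ by simpa [identifyingVector] using congrFun h j

lemma Matrix.rank_submatrix_of_col_eq_zero {m n n' R : Type*} [CommSemiring R] [Fintype n]
    [Fintype n'] (M : Matrix m n R) (c : n' → n) (h : ∀ j ∉ Set.range c, M.col j = 0) :
    (M.submatrix id c).rank = M.rank := by
  have hspan : Submodule.span R (Set.range (M.submatrix id c).col) =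
      Submodule.span R (Set.range M.col) := by
    refine le_antisymm (Submodule.span_mono (Set.range_comp_subset_range c M.col)) ?_
    rw [Submodule.span_le]
    rintro _ ⟨j, rfl⟩
    by_cases hj : j ∈ Set.range c
    · obtain ⟨j', rfl⟩ := hj
      exact Submodule.subset_span ⟨j', rfl⟩
    · simp [h j hj]
  rw [rank_eq_finrank_span_cols, rank_eq_finrank_span_cols, hspan]

section RREF

variable {F : Type*} [Field F] {k n : ℕ} {A B : Matrix (Fin k) (Fin n) F} {p : Fin k → Fin n}

lemma IsRREF.vecMul_apply_pivot (hA : IsRREF A p) (y : Fin k → F) (i : Fin k) :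
    (y ᵥ* A) (p i) = y i := by
  obtain ⟨-, hone, -, hzero⟩ := hA
  rw [vecMul, dotProduct, Finset.sum_eq_single i (fun i' _ hi' ↦ by simp [hzero i i' hi'])
    (by simp), hone, mul_one]

lemma IsRREF.vecMul_injective (hA : IsRREF A p) : Function.Injective A.vecMul :=
  fun y z h ↦ funext fun i ↦ by simpa only [hA.vecMul_apply_pivot] using congrFun h (p i)

lemma IsRREF.finrank_span_rows (hA : IsRREF A p) :
    finrank F (Submodule.span F (Set.range A.row)) = k := by
  rw [finrank_span_eq_card (vecMul_injective_iff.mp hA.vecMul_injective), Fintype.card_fin]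

lemma IsRREF.sub_apply_pivot (hA : IsRREF A p) (hB : IsRREF B p) (i' i : Fin k) :
    (A - B) i' (p i) = 0 := by
  obtain rfl | h := eq_or_ne i' i
  · simp [hA.2.1 i', hB.2.1 i']
  · simp [hA.2.2.2 i i' h, hB.2.2.2 i i' h]

lemma IsRREF.span_rows_inf (hA : IsRREF A p) (hB : IsRREF B p) :
    Submodule.span F (Set.range A.row) ⊓ Submodule.span F (Set.range B.row) =
      (LinearMap.ker (A - B).vecMulLinear).map A.vecMulLinear := by
  simp_rw [← range_vecMulLinear]
  ext x
  constructor
  · rintro ⟨⟨y, rfl⟩, z, hz⟩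
    obtain rfl : z = y := funext fun i ↦ by
      simpa only [vecMulLinear_apply, hA.vecMul_apply_pivot, hB.vecMul_apply_pivot]
        using congrFun hz (p i)
    refine ⟨z, ?_, rfl⟩
    simpa [vecMul_sub, sub_eq_zero] using hz.symm
  · rintro ⟨y, hy, rfl⟩
    refine ⟨⟨y, rfl⟩, y, ?_⟩
    simpa [vecMul_sub, sub_eq_zero, eq_comm] using hy

lemma IsRREF.finrank_inf_add_rank_sub (hA : IsRREF A p) (hB : IsRREF B p) :
    finrank F ↥(Submodule.span F (Set.range A.row) ⊓ Submodule.span F (Set.range B.row)) +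
      (A - B).rank = k := by
  rw [hA.span_rows_inf hB, ← (Submodule.equivMapOfInjective _ hA.vecMul_injective _).finrank_eq,
    rank_eq_finrank_span_row, ← range_vecMulLinear, add_comm,
    LinearMap.finrank_range_add_finrank_ker, finrank_fin_fun]

end RREF

theorem stmt_6_general {F : Type*} [Field F] {k n : ℕ}
    (A B : Matrix (Fin k) (Fin n) F) (pA pB : Fin k → Fin n)
    (hA : IsRREF A pA) (hB : IsRREF B pB)
    (hv : identifyingVector pA = identifyingVector pB)
    (U V : Submodule F (Fin n → F))
    (hU : U = Submodule.span F (Set.range fun i => A i))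
    (hV : V = Submodule.span F (Set.range fun i => B i))
    -- `c` enumerates, in increasing order, the `n - k` non-pivot columns
    (c : Fin (n - k) → Fin n)
    (hcp : ∀ j, (∃ i, c i = j) ↔ ¬∃ i, pA i = j) :
    subDist U V = 2 * rankDist (A.submatrix id c) (B.submatrix id c) := by
  obtain rfl := eq_of_identifyingVector_eq hA.1 hB.1 hv
  have hcols : ∀ j ∉ Set.range c, (A - B).col j = 0 := by
    intro j hj
    obtain ⟨i, rfl⟩ : ∃ i, pA i = j := not_not.mp fun h ↦ hj ((hcp j).2 h)
    exact funext fun i' ↦ hA.sub_apply_pivot hB i' i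
  have hdim := hA.finrank_inf_add_rank_sub hB
  subst hU hV
  rw [show (Set.range fun i => A i) = Set.range A.row from rfl,
    show (Set.range fun i => B i) = Set.range B.row from rfl, subDist, rankDist,
    hA.finrank_span_rows, hB.finrank_span_rows,
    show A.submatrix id c - B.submatrix id c = (A - B).submatrix id c from rfl,
    rank_submatrix_of_col_eq_zero _ _ hcols]
  omega

theorem stmt_6 {F : Type*} [Field F] [Fintype F] {k n : ℕ}
    (A B : Matrix (Fin k) (Fin n) F) (pA pB : Fin k → Fin n)
    (hA : IsRREF A pA) (hB : IsRREF B pB)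
    (hv : identifyingVector pA = identifyingVector pB)
    (U V : Submodule F (Fin n → F))
    (hU : U = Submodule.span F (Set.range fun i => A i))
    (hV : V = Submodule.span F (Set.range fun i => B i))
    -- `c` enumerates, in increasing order, the `n - k` non-pivot columns
    (c : Fin (n - k) → Fin n) (hc : StrictMono c)
    (hcp : ∀ j, (∃ i, c i = j) ↔ ¬∃ i, pA i = j) :
    subDist U V = 2 * rankDist (A.submatrix id c) (B.submatrix id c) :=
  stmt_6_general A B pA pB hA hB hv U V hU hV c hcp
end

section
/- Let C be a flag code of type (t_1, t_2, …, t_r) on F_q^n with at least two elements. Then C is an optimum distance flag code if and only if C is disjoint (i.e., every i-projection p_i : C → G_q(n, t_i), F ↦ F_i, is injective, so |C_i| = |C| for all i) and every i-projected code C_i = {F_i : F ∈ C} attains the maximum possible subspace distance, that is, d_S(C_i) = min{2t_i, 2(n − t_i)}. -/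
open Module

/-- A type vector `t = (t_1 < t_2 < ⋯ < t_r)` with `0 < t_i < n`. -/
def IsFlagType (n : ℕ) {r : ℕ} (t : Fin r → ℕ) : Prop :=
  StrictMono t ∧ (∀ i, 0 < t i) ∧ ∀ i, t i < n

/-- A flag of type `t` on `F^n`: a strictly increasing chain of subspaces with
`dim 𝓕 i = t i`. -/
def IsFlag {F : Type*} [Field F] (n : ℕ) {r : ℕ} (t : Fin r → ℕ)
    (𝓕 : Fin r → Submodule F (Fin n → F)) : Prop :=
  (∀ i, finrank F (𝓕 i) = t i) ∧ StrictMono 𝓕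

/-- The flag distance `d_f(𝓕,𝓕') = ∑ i, d_S(𝓕 i, 𝓕' i)`. -/
noncomputable def flagDist {F : Type*} [Field F] {n r : ℕ}
    (𝓕 𝓕' : Fin r → Submodule F (Fin n → F)) : ℕ :=
  ∑ i, subDist (𝓕 i) (𝓕' i)

/-- The minimum flag distance of a flag code `C`. -/
noncomputable def minFlagDist {F : Type*} [Field F] {n r : ℕ}
    (C : Set (Fin r → Submodule F (Fin n → F))) : ℕ :=
  sInf {d | ∃ 𝓕 ∈ C, ∃ 𝓕' ∈ C, 𝓕 ≠ 𝓕' ∧ d = flagDist 𝓕 𝓕'}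

/-- The minimum subspace distance of a set of subspaces. -/
noncomputable def minSubDist {F : Type*} [Field F] {n : ℕ}
    (D : Set (Submodule F (Fin n → F))) : ℕ :=
  sInf {d | ∃ U ∈ D, ∃ V ∈ D, U ≠ V ∧ d = subDist U V}

lemma subDist_self {F : Type*} [Field F] {n : ℕ} (U : Submodule F (Fin n → F)) :
    subDist U U = 0 := by
  unfold subDist
  rw [inf_idem]
  omega

lemma subDist_le_min {F : Type*} [Field F] {n : ℕ}
    (U V : Submodule F (Fin n → F)) {a : ℕ} (hU : finrank F U = a) (hV : finrank F V = a) :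
    subDist U V ≤ min (2 * a) (2 * (n - a)) := by
  have h1 := Submodule.finrank_sup_add_finrank_inf_eq U V
  have h2 : finrank F (U ⊔ V : Submodule F (Fin n → F)) ≤ n := by
    have := Submodule.finrank_le (U ⊔ V)
    simpa [Module.finrank_fin_fun] using this
  have h3 : a ≤ n := by
    have := Submodule.finrank_le U
    simp only [Module.finrank_fin_fun] at this; omega
  unfold subDist
  omega

theorem stmt_9 {F : Type*} [Field F] [Fintype F] (n r : ℕ) (t : Fin r → ℕ)
    (ht : IsFlagType n t)
    (C : Set (Fin r → Submodule F (Fin n → F)))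
    (hC : ∀ 𝓕 ∈ C, IsFlag n t 𝓕) (hcard : 1 < C.ncard) :
    (minFlagDist C =
        2 * ((∑ i ∈ Finset.univ.filter (fun i => t i ≤ n / 2), t i) +
          ∑ i ∈ Finset.univ.filter (fun i => n / 2 < t i), (n - t i))) ↔
      ((∀ i : Fin r, Set.InjOn (fun 𝓕 => 𝓕 i) C) ∧
        ∀ i : Fin r,
          minSubDist ((fun 𝓕 => 𝓕 i) '' C) = min (2 * t i) (2 * (n - t i))) := by
  obtain ⟨hmono, hpos, hlt⟩ := ht
  set M : Fin r → ℕ := fun i => min (2 * t i) (2 * (n - t i)) with hM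
  -- The target number equals ∑ M
  have hMpos : ∀ i, 0 < M i := by
    intro i
    have := hpos i
    have := hlt i
    simp only [hM, lt_min_iff]
    omega
  have hDmax : 2 * ((∑ i ∈ Finset.univ.filter (fun i => t i ≤ n / 2), t i) +
      ∑ i ∈ Finset.univ.filter (fun i => n / 2 < t i), (n - t i)) = ∑ i, M i := by
    rw [mul_add, Finset.mul_sum, Finset.mul_sum,
      ← Finset.sum_filter_add_sum_filter_not Finset.univ (fun i => t i ≤ n / 2) M]
    congr 1
    · refine Finset.sum_congr rfl fun i hi => ?_
      simp only [Finset.mem_filter] at hi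
      have := hlt i
      simp only [hM]
      omega
    · refine Finset.sum_congr ?_ fun i hi => ?_
      · ext i; simp [not_le]
      · simp only [Finset.mem_filter, not_le] at hi
        have := hlt i
        simp only [hM]
        omega
  -- basic bound
  have hle : ∀ 𝓕 ∈ C, ∀ 𝓕' ∈ C, ∀ i, subDist (𝓕 i) (𝓕' i) ≤ M i := fun 𝓕 h𝓕 𝓕' h𝓕' i =>
    subDist_le_min _ _ ((hC 𝓕 h𝓕).1 i) ((hC 𝓕' h𝓕').1 i)
  have hflagle : ∀ 𝓕 ∈ C, ∀ 𝓕' ∈ C, flagDist 𝓕 𝓕' ≤ ∑ i, M i := fun 𝓕 h𝓕 𝓕' h𝓕' =>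
    Finset.sum_le_sum fun i _ => hle 𝓕 h𝓕 𝓕' h𝓕' i
  -- get two distinct elements of C
  have hfin : C.Finite := by
    by_contra h
    rw [Set.Infinite.ncard h] at hcard
    omega
  obtain ⟨𝓕₀, 𝓕₁, h𝓕₀, h𝓕₁, hne01⟩ := (Set.one_lt_ncard_iff hfin).mp hcard
  rw [hDmax]
  constructor
  · rintro hmin
    -- every pair of distinct flags has distance exactly ∑ M, hence each coord at max
    have hall : ∀ 𝓕 ∈ C, ∀ 𝓕' ∈ C, 𝓕 ≠ 𝓕' → ∀ i, subDist (𝓕 i) (𝓕' i) = M i := by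
      intro 𝓕 h𝓕 𝓕' h𝓕' hne
      have hmem : flagDist 𝓕 𝓕' ∈
          {d | ∃ 𝓐 ∈ C, ∃ 𝓑 ∈ C, 𝓐 ≠ 𝓑 ∧ d = flagDist 𝓐 𝓑} :=
        ⟨𝓕, h𝓕, 𝓕', h𝓕', hne, rfl⟩
      have hinf := Nat.sInf_le hmem
      rw [show sInf {d | ∃ 𝓐 ∈ C, ∃ 𝓑 ∈ C, 𝓐 ≠ 𝓑 ∧ d = flagDist 𝓐 𝓑} = minFlagDist C
        from rfl, hmin] at hinf
      have heq : flagDist 𝓕 𝓕' = ∑ i, M i :=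
        le_antisymm (hflagle 𝓕 h𝓕 𝓕' h𝓕') hinf
      intro i
      have := (Finset.sum_eq_sum_iff_of_le
        (fun i (_ : i ∈ Finset.univ) => hle 𝓕 h𝓕 𝓕' h𝓕' i)).mp heq i (Finset.mem_univ i)
      exact this
    have hinj : ∀ i : Fin r, Set.InjOn (fun 𝓕 => 𝓕 i) C := by
      intro i 𝓕 h𝓕 𝓕' h𝓕' heq
      by_contra hne
      have := hall 𝓕 h𝓕 𝓕' h𝓕' hne i
      simp only at heq
      rw [heq, subDist_self] at this
      exact absurd this (Nat.ne_of_lt (hMpos i))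
    refine ⟨hinj, fun i => ?_⟩
    have hset : {d | ∃ U ∈ (fun 𝓕 => 𝓕 i) '' C, ∃ V ∈ (fun 𝓕 => 𝓕 i) '' C,
        U ≠ V ∧ d = subDist U V} = {M i} := by
      ext d
      simp only [Set.mem_setOf_eq, Set.mem_singleton_iff]
      constructor
      · rintro ⟨U, ⟨𝓐, h𝓐, rfl⟩, V, ⟨𝓑, h𝓑, rfl⟩, hUV, rfl⟩
        have hAB : 𝓐 ≠ 𝓑 := fun h => hUV (by rw [h])
        exact hall 𝓐 h𝓐 𝓑 h𝓑 hAB i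
      · rintro rfl
        have hne' : 𝓕₀ i ≠ 𝓕₁ i := fun h => by
          have := hall 𝓕₀ h𝓕₀ 𝓕₁ h𝓕₁ hne01 i
          rw [h, subDist_self] at this
          exact absurd this (Nat.ne_of_lt (hMpos i))
        exact ⟨𝓕₀ i, ⟨𝓕₀, h𝓕₀, rfl⟩, 𝓕₁ i, ⟨𝓕₁, h𝓕₁, rfl⟩, hne',
          (hall 𝓕₀ h𝓕₀ 𝓕₁ h𝓕₁ hne01 i).symm⟩
    unfold minSubDist
    rw [hset]
    exact csInf_singleton _
  · rintro ⟨hinj, hmax⟩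
    -- every distinct pair achieves max in every coordinate
    have hall : ∀ 𝓕 ∈ C, ∀ 𝓕' ∈ C, 𝓕 ≠ 𝓕' → ∀ i, subDist (𝓕 i) (𝓕' i) = M i := by
      intro 𝓕 h𝓕 𝓕' h𝓕' hne i
      have hne' : 𝓕 i ≠ 𝓕' i := fun h => hne (hinj i h𝓕 h𝓕' h)
      have hmem : subDist (𝓕 i) (𝓕' i) ∈
          {d | ∃ U ∈ (fun 𝓕 => 𝓕 i) '' C, ∃ V ∈ (fun 𝓕 => 𝓕 i) '' C,
            U ≠ V ∧ d = subDist U V} :=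
        ⟨𝓕 i, ⟨𝓕, h𝓕, rfl⟩, 𝓕' i, ⟨𝓕', h𝓕', rfl⟩, hne', rfl⟩
      have hinf := Nat.sInf_le hmem
      have : minSubDist ((fun 𝓕 => 𝓕 i) '' C) ≤ subDist (𝓕 i) (𝓕' i) := hinf
      rw [hmax i] at this
      exact le_antisymm (hle 𝓕 h𝓕 𝓕' h𝓕' i) this
    have hflag : ∀ 𝓕 ∈ C, ∀ 𝓕' ∈ C, 𝓕 ≠ 𝓕' → flagDist 𝓕 𝓕' = ∑ i, M i := by
      intro 𝓕 h𝓕 𝓕' h𝓕' hne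
      exact Finset.sum_congr rfl fun i _ => hall 𝓕 h𝓕 𝓕' h𝓕' hne i
    have hset : {d | ∃ 𝓐 ∈ C, ∃ 𝓑 ∈ C, 𝓐 ≠ 𝓑 ∧ d = flagDist 𝓐 𝓑} = {∑ i, M i} := by
      ext d
      simp only [Set.mem_setOf_eq, Set.mem_singleton_iff]
      constructor
      · rintro ⟨𝓐, h𝓐, 𝓑, h𝓑, hne, rfl⟩
        exact hflag 𝓐 h𝓐 𝓑 h𝓑 hne
      · rintro rfl
        exact ⟨𝓕₀, h𝓕₀, 𝓕₁, h𝓕₁, hne01, (hflag 𝓕₀ h𝓕₀ 𝓕₁ h𝓕₁ hne01).symm⟩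
    unfold minFlagDist
    rw [hset]
    exact csInf_singleton _
end

section
/- Let q be a prime power and n, k positive integers with n/k ≥ 2. Let A ⊆ {1, 2, …, k, n−k, …, n−1} with A ∩ {k, n−k} ≠ ∅, and write n ≡ r (mod k) with 0 ≤ r < k. If r ≠ 0, then the maximum size A_q(n, A) of an (n, A)_q optimum distance flag code satisfies A_q(n, A) ≤ (q^n − q^r)/(q^k − 1) − ⌊(√(4q^k(q^k − q^r) + 1) − (2q^k − 2q^r + 1))/2⌋ − 1. -/
open Module

/-- A flag on `F^n` whose sequence of dimensions is the increasing enumeration of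
the finite set `A`: a family of subspaces indexed by `A`, with `dim (𝓕 a) = a`,
forming a strictly increasing chain. -/
def IsFlagOfSet {F : Type*} [Field F] (n : ℕ) (A : Finset ℕ)
    (𝓕 : A → Submodule F (Fin n → F)) : Prop :=
  (∀ a : A, finrank F (𝓕 a) = (a : ℕ)) ∧
    ∀ a b : A, (a : ℕ) < (b : ℕ) → 𝓕 a < 𝓕 b

/-- The flag distance `d_f(𝓕,𝓕') = ∑ a, d_S(𝓕 a, 𝓕' a)`. -/
noncomputable def flagDistSet {F : Type*} [Field F] {n : ℕ} {A : Finset ℕ}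
    (𝓕 𝓕' : A → Submodule F (Fin n → F)) : ℕ :=
  ∑ a, subDist (𝓕 a) (𝓕' a)

/-- The minimum flag distance of a flag code `C`. -/
noncomputable def minFlagDistSet {F : Type*} [Field F] {n : ℕ} {A : Finset ℕ}
    (C : Set (A → Submodule F (Fin n → F))) : ℕ :=
  sInf {d | ∃ 𝓕 ∈ C, ∃ 𝓕' ∈ C, 𝓕 ≠ 𝓕' ∧ d = flagDistSet 𝓕 𝓕'}

/-- An `(n, A)_q` optimum distance flag code: a non-empty set of flags of type given
by the increasing enumeration of `A` whose minimum flag distance attains the maximum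
possible value `2(∑_{a ≤ ⌊n/2⌋} a + ∑_{a > ⌊n/2⌋} (n - a))`. -/
def IsODFC {F : Type*} [Field F] (n : ℕ) (A : Finset ℕ)
    (C : Set (A → Submodule F (Fin n → F))) : Prop :=
  C.Nonempty ∧ (∀ 𝓕 ∈ C, IsFlagOfSet n A 𝓕) ∧
    minFlagDistSet C =
      2 * ((∑ a ∈ A.filter (fun a => a ≤ n / 2), a) +
        ∑ a ∈ A.filter (fun a => n / 2 < a), (n - a))

/-!
In an optimum distance flag code, two distinct flags are at the largest possible subspace
distance `2 min(a, n - a)` in every dimension `a`. In dimension `k` this says that their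
`k`-dimensional members meet trivially; in dimension `n - k` it says that their
`(n - k)`-dimensional members span `F^n`, so that their annihilators are trivially intersecting
`k`-dimensional subspaces of the dual. Either way the code injects into a partial `k`-spread, and
the bound is the Drake–Freeman bound for partial spreads.

That bound is a second-moment count over the nonzero functionals `φ`. Let `b φ` be the number of
members of the spread `S` contained in `ker φ`. Double counting gives `∑ b φ` and
`∑ b φ (b φ - 1)`. Since `(b - c)(b - c - 1) ≥ 0` for integers `b` and `c`, taking
`c = (q^(n-k) - q^r)/(q^k - 1)` (with `r = n % k`) and writing `#S = (q^n - q^r)/(q^k - 1) - s`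
yields a quadratic inequality in the deficiency `s`, which forces `s` to exceed the quantity
inside the floor.
-/

open Finset Function

section Arithmetic

-- In the application `x = q^r`, `y = q^k`, `z = q^(n-2k)`, and `c * y + x = (q^n - q^r)/(q^k - 1)`.
variable {x y z c m s : ℤ}

lemma sub_one_dvd_pow_sub_sub_pow_mod (q : ℤ) {k n : ℕ} (hkn : k ≤ n) :
    q ^ k - 1 ∣ q ^ (n - k) - q ^ (n % k) := by
  have hmod : (n - k) % k = n % k := by
    simpa using Nat.sub_mul_mod (x := n) (k := 1) (n := k) (by simpa using hkn)
  have h : q ^ (n - k) = q ^ (n % k) * (q ^ k) ^ ((n - k) / k) := by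
    rw [← pow_mul, ← pow_add, ← hmod, Nat.mod_add_div]
  rw [h, ← mul_sub_one]
  exact (sub_one_dvd_pow_sub_one _ _).mul_left _

lemma Int.mul_sub_one_nonneg (a : ℤ) : 0 ≤ a * (a - 1) := by
  rcases le_or_gt a 0 with ha | ha
  · exact mul_nonneg_of_nonpos_of_nonpos ha (by omega)
  · exact mul_nonneg ha.le (by omega)

lemma le_mul_add_of_mul_sub_one_le (hx : 1 ≤ x) (hxy : x < y) (hc : c * (y - 1) = z * y - x)
    (h : m * (y - 1) ≤ z * y * y - 1) : m ≤ c * y + x := by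
  have hsucc : (c * y + x + 1) * (y - 1) = z * y * y - 1 + (y - x) := by
    linear_combination y * hc
  have hlt : m * (y - 1) < (c * y + x + 1) * (y - 1) := by linarith
  have := lt_of_mul_lt_mul_right hlt (by omega)
  omega

lemma moment_quadratic_eq (hc : c * (y - 1) = z * y - x) (hm : m + s = c * y + x) :
    m * (m - 1) * (z - 1) - 2 * c * (m * (z * y - 1)) + c * (c + 1) * (z * y * y - 1)
      = z * ((s + y - x) * (s + y - x + 1) - y * (y - x)) - s * (s + 1) := by
  obtain rfl : x = z * y - c * (y - 1) := by linarith
  obtain rfl : m = c * y + (z * y - c * (y - 1)) - s := by linarith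
  ring

lemma lt_of_moment_quadratic_nonneg (hx : 2 ≤ x) (hxy : x < y) (hz : 1 ≤ z) (hs : 0 ≤ s)
    (h : 0 ≤ z * ((s + y - x) * (s + y - x + 1) - y * (y - x)) - s * (s + 1)) :
    y * (y - x) < (s + y - x) * (s + y - x + 1) := by
  by_contra! hle
  have : z * ((s + y - x) * (s + y - x + 1) - y * (y - x)) ≤ 0 :=
    mul_nonpos_of_nonneg_of_nonpos (by omega) (by omega)
  rcases hs.eq_or_lt with rfl | hs
  · have : (y - x) * (1 - x) < 0 := mul_neg_of_pos_of_neg (by omega) (by omega)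
    nlinarith
  · nlinarith

lemma floor_lt_of_lt_mul_add_one (hxy : x ≤ y) (hs : 0 ≤ s)
    (h : y * (y - x) < (s + y - x) * (s + y - x + 1)) :
    ⌊(Real.sqrt (4 * (y : ℝ) * (y - x) + 1) - (2 * y - 2 * x + 1)) / 2⌋ < s := by
  have hsqrt : Real.sqrt (4 * (y : ℝ) * (y - x) + 1) < 2 * (s + y - x) + 1 := by
    rw [Real.sqrt_lt' (by exact_mod_cast (by omega : (0 : ℤ) < 2 * (s + y - x) + 1))]
    exact_mod_cast (by nlinarith : 4 * y * (y - x) + 1 < (2 * (s + y - x) + 1) ^ 2)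
  rw [Int.floor_lt]
  linarith

lemma le_sub_floor_of_moments {ι : Type*} (Φ : Finset ι) (b : ι → ℤ) (hx : 2 ≤ x)
    (hxy : x < y) (hz : 1 ≤ z) (hc : c * (y - 1) = z * y - x) (hΦ : (#Φ : ℤ) = z * y * y - 1)
    (h₁ : ∑ φ ∈ Φ, b φ = m * (z * y - 1))
    (h₂ : ∑ φ ∈ Φ, b φ * (b φ - 1) = m * (m - 1) * (z - 1))
    (hcover : m * (y - 1) ≤ z * y * y - 1) :
    m ≤ c * y + x - ⌊(Real.sqrt (4 * (y : ℝ) * (y - x) + 1) - (2 * y - 2 * x + 1)) / 2⌋ - 1 := by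
  have hs : 0 ≤ c * y + x - m := by
    linarith [le_mul_add_of_mul_sub_one_le (by omega) hxy hc hcover]
  have hvar : 0 ≤ ∑ φ ∈ Φ, (b φ - c) * (b φ - c - 1) :=
    sum_nonneg fun φ _ => Int.mul_sub_one_nonneg _
  have hexpand : ∑ φ ∈ Φ, (b φ - c) * (b φ - c - 1) =
      ∑ φ ∈ Φ, b φ * (b φ - 1) - 2 * c * ∑ φ ∈ Φ, b φ + c * (c + 1) * #Φ := by
    rw [mul_sum, ← sum_sub_distrib, mul_comm _ (#Φ : ℤ), ← nsmul_eq_mul, ← sum_const,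
      ← sum_add_distrib]
    exact sum_congr rfl fun _ _ => by ring
  rw [hexpand, h₁, h₂, hΦ, moment_quadratic_eq (s := c * y + x - m) hc (by ring)] at hvar
  have := floor_lt_of_lt_mul_add_one hxy.le hs (lt_of_moment_quadratic_nonneg hx hxy hz hs hvar)
  omega

end Arithmetic

lemma Finset.intCast_card_offDiag {α : Type*} [DecidableEq α] (s : Finset α) :
    (#s.offDiag : ℤ) = #s * (#s - 1) := by
  rw [offDiag_card, Nat.cast_sub (Nat.le_mul_self _)]
  push_cast
  ring

lemma Submodule.finrank_sup_eq_add_of_disjoint {K V : Type*} [DivisionRing K] [AddCommGroup V]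
    [Module K V] [FiniteDimensional K V] {W W' : Submodule K V} (h : Disjoint W W') :
    finrank K ↥(W ⊔ W') = finrank K W + finrank K W' := by
  rw [← Submodule.finrank_sup_add_finrank_inf_eq, h.eq_bot, finrank_bot, add_zero]

section Counting

open scoped Classical

variable {F V : Type*} [Field F] [Fintype F] [AddCommGroup V] [Module F V] {k : ℕ}
  {S : Finset (Submodule F V)}

lemma card_mul_le_of_pairwise_disjoint [Fintype V] (hdim : ∀ W ∈ S, finrank F W = k)
    (hdisj : (S : Set (Submodule F V)).Pairwise Disjoint) :
    #S * (Fintype.card F ^ k - 1) ≤ Fintype.card F ^ finrank F V - 1 := by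
  calc #S * (Fintype.card F ^ k - 1)
      = ∑ W ∈ S, #{v ∈ univ.erase (0 : V) | v ∈ W} := by
        rw [sum_congr rfl fun W hW => ?_, sum_const, smul_eq_mul]
        rw [filter_erase, card_erase_of_mem (by simp), ← Fintype.card_subtype,
          card_eq_pow_finrank (K := F), hdim W hW]
    _ = ∑ v ∈ univ.erase (0 : V), #{W ∈ S | v ∈ W} :=
        (sum_card_bipartiteAbove_eq_sum_card_bipartiteBelow _).symm
    _ ≤ #(univ.erase (0 : V)) • 1 := by
        refine sum_le_card_nsmul _ _ _ fun v hv => card_le_one.2 fun W hW W' hW' => ?_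
        by_contra hne
        rw [mem_filter] at hW hW'
        exact (mem_erase.1 hv).1 (Submodule.disjoint_def.1 (hdisj hW.1 hW'.1 hne) v hW.2 hW'.2)
    _ = _ := by
        rw [smul_eq_mul, mul_one, card_erase_of_mem (mem_univ _), card_univ,
          card_eq_pow_finrank (K := F)]

variable [Fintype (Dual F V)]

lemma card_erase_zero_dual :
    #(univ.erase (0 : Dual F V)) = Fintype.card F ^ finrank F V - 1 := by
  rw [card_erase_of_mem (mem_univ _), card_univ, card_eq_pow_finrank (K := F),
    Subspace.dual_finrank_eq]

variable [FiniteDimensional F V]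

lemma card_filter_le_ker (W : Submodule F V) :
    #{φ : Dual F V | W ≤ LinearMap.ker φ} = Fintype.card F ^ (finrank F V - finrank F W) := by
  have hmem (φ : Dual F V) : W ≤ LinearMap.ker φ ↔ φ ∈ W.dualAnnihilator := by
    simp only [Submodule.mem_dualAnnihilator, SetLike.le_def, LinearMap.mem_ker]
  rw [← Fintype.card_subtype, ← Nat.card_eq_fintype_card,
    Nat.card_congr (Equiv.subtypeEquivRight hmem), Module.natCard_eq_pow_finrank (K := F),
    Nat.card_eq_fintype_card, ← Subspace.finrank_add_finrank_dualAnnihilator_eq W,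
    Nat.add_sub_cancel_left]

lemma card_filter_ne_zero_le_ker (W : Submodule F V) :
    #{φ ∈ univ.erase (0 : Dual F V) | W ≤ LinearMap.ker φ} =
      Fintype.card F ^ (finrank F V - finrank F W) - 1 := by
  rw [filter_erase, card_erase_of_mem (by simp), card_filter_le_ker]

lemma sum_card_filter_le_ker (hdim : ∀ W ∈ S, finrank F W = k) :
    ∑ φ ∈ univ.erase (0 : Dual F V), #{W ∈ S | W ≤ LinearMap.ker φ} =
      #S * (Fintype.card F ^ (finrank F V - k) - 1) := by
  calc _ = ∑ W ∈ S, #{φ ∈ univ.erase (0 : Dual F V) | W ≤ LinearMap.ker φ} :=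
        sum_card_bipartiteAbove_eq_sum_card_bipartiteBelow _
    _ = _ := by
      rw [sum_congr rfl fun W hW => by rw [card_filter_ne_zero_le_ker, hdim W hW], sum_const,
        smul_eq_mul]

lemma sum_card_offDiag_filter_le_ker (hdim : ∀ W ∈ S, finrank F W = k)
    (hdisj : (S : Set (Submodule F V)).Pairwise Disjoint) :
    ∑ φ ∈ univ.erase (0 : Dual F V), #{W ∈ S | W ≤ LinearMap.ker φ}.offDiag =
      #S.offDiag * (Fintype.card F ^ (finrank F V - 2 * k) - 1) := by
  have hoff (φ : Dual F V) : {W ∈ S | W ≤ LinearMap.ker φ}.offDiag =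
      {p ∈ S.offDiag | p.1 ⊔ p.2 ≤ LinearMap.ker φ} := by
    ext
    simp only [mem_offDiag, mem_filter, sup_le_iff]
    tauto
  simp_rw [hoff]
  calc _ = ∑ p ∈ S.offDiag, #{φ ∈ univ.erase (0 : Dual F V) | p.1 ⊔ p.2 ≤ LinearMap.ker φ} :=
        sum_card_bipartiteAbove_eq_sum_card_bipartiteBelow _
    _ = _ := by
      refine (sum_congr rfl fun p hp => ?_).trans (by rw [sum_const, smul_eq_mul])
      obtain ⟨hp₁, hp₂, hne⟩ := mem_offDiag.1 hp
      rw [card_filter_ne_zero_le_ker,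
        Submodule.finrank_sup_eq_add_of_disjoint (hdisj hp₁ hp₂ hne), hdim _ hp₁, hdim _ hp₂,
        two_mul]

end Counting

noncomputable def drakeFreemanBound (q n k : ℕ) : ℝ :=
  ((q : ℝ) ^ n - (q : ℝ) ^ (n % k)) / ((q : ℝ) ^ k - 1)
    - (⌊(Real.sqrt (4 * (q : ℝ) ^ k * ((q : ℝ) ^ k - (q : ℝ) ^ (n % k)) + 1)
        - (2 * (q : ℝ) ^ k - 2 * (q : ℝ) ^ (n % k) + 1)) / 2⌋ : ℝ) - 1

lemma pow_sub_pow_mod_div_eq {q n k : ℕ} {c : ℤ} (hq : 1 < q) (hk : 0 < k)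
    (hn : (q : ℤ) ^ n = q ^ (n - 2 * k) * q ^ k * q ^ k)
    (hc : (q : ℤ) ^ (n - 2 * k) * q ^ k - q ^ (n % k) = (q ^ k - 1) * c) :
    ((q : ℝ) ^ n - q ^ (n % k)) / (q ^ k - 1) = c * q ^ k + q ^ (n % k) := by
  rw [div_eq_iff (sub_ne_zero.2 (one_lt_pow₀ (by exact_mod_cast hq) hk.ne').ne')]
  exact_mod_cast (by linear_combination hn + (q : ℤ) ^ k * hc :
    (q : ℤ) ^ n - q ^ (n % k) = (c * q ^ k + q ^ (n % k)) * (q ^ k - 1))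

open scoped Classical in
theorem card_le_drakeFreemanBound {F V : Type*} [Field F] [Fintype F] [AddCommGroup V]
    [Module F V] [FiniteDimensional F V] {q n k : ℕ} {S : Finset (Submodule F V)}
    (hq : Fintype.card F = q) (hn : finrank F V = n) (hk : 0 < k) (hkn : 2 * k ≤ n)
    (hr : n % k ≠ 0) (hdim : ∀ W ∈ S, finrank F W = k)
    (hdisj : (S : Set (Submodule F V)).Pairwise Disjoint) :
    (#S : ℝ) ≤ drakeFreemanBound q n k := by
  have : Finite (Dual F V) := Module.finite_of_finite F
  let := Fintype.ofFinite (Dual F V)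
  have hq1 : 1 < q := hq ▸ Fintype.one_lt_card
  have hq0 : 0 < q := by omega
  have hqZ : (1 : ℤ) < q := by exact_mod_cast hq1
  have hpow_nk : (q : ℤ) ^ (n - k) = q ^ (n - 2 * k) * q ^ k := by
    rw [← pow_add]; congr 1; omega
  have hpow_n : (q : ℤ) ^ n = q ^ (n - 2 * k) * q ^ k * q ^ k := by
    rw [← hpow_nk, ← pow_add]; congr 1; omega
  obtain ⟨c, hc⟩ := sub_one_dvd_pow_sub_sub_pow_mod (q : ℤ) (by omega : k ≤ n)
  have hΦ : (#(univ.erase (0 : Dual F V)) : ℤ) = q ^ n - 1 := by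
    rw [card_erase_zero_dual, hq, hn, Nat.cast_pred (pow_pos hq0 _)]
    push_cast; rfl
  have h₁ : ∑ φ ∈ univ.erase (0 : Dual F V), (#{W ∈ S | W ≤ LinearMap.ker φ} : ℤ) =
      #S * (q ^ (n - k) - 1) := by
    rw [← Nat.cast_sum, sum_card_filter_le_ker hdim, hq, hn, Nat.cast_mul,
      Nat.cast_pred (pow_pos hq0 _)]
    push_cast; rfl
  have h₂ : ∑ φ ∈ univ.erase (0 : Dual F V),
      (#{W ∈ S | W ≤ LinearMap.ker φ} : ℤ) * (#{W ∈ S | W ≤ LinearMap.ker φ} - 1) =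
      #S * (#S - 1) * (q ^ (n - 2 * k) - 1) := by
    simp_rw [← intCast_card_offDiag]
    rw [← Nat.cast_sum, sum_card_offDiag_filter_le_ker hdim hdisj, hq, hn, Nat.cast_mul,
      intCast_card_offDiag, Nat.cast_pred (pow_pos hq0 _)]
    push_cast; rfl
  have hcover : (#S : ℤ) * (q ^ k - 1) ≤ q ^ n - 1 := by
    have : Finite V := Module.finite_of_finite F
    let := Fintype.ofFinite V
    have := card_mul_le_of_pairwise_disjoint hdim hdisj
    rw [hq, hn] at this
    zify [Nat.one_le_pow k _ hq0, Nat.one_le_pow n _ hq0] at this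
    exact this
  rw [hpow_nk] at hc h₁
  rw [hpow_n] at hΦ hcover
  have key := le_sub_floor_of_moments (x := (q : ℤ) ^ (n % k)) (y := q ^ k)
    (z := q ^ (n - 2 * k)) (c := c) _ _ ((le_self_pow₀ hqZ.le hr).trans' (by exact_mod_cast hq1))
    (pow_lt_pow_right₀ hqZ (Nat.mod_lt n hk)) (one_le_pow₀ hqZ.le) (by linear_combination -hc)
    hΦ h₁ h₂ hcover
  rw [drakeFreemanBound, pow_sub_pow_mod_div_eq hq1 hk hpow_n hc]
  exact_mod_cast key

theorem ncard_le_drakeFreemanBound {F V ι : Type*} [Field F] [Fintype F] [AddCommGroup V]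
    [Module F V] [FiniteDimensional F V] {q n k : ℕ} {C : Set ι} (hC : C.Finite)
    (f : ι → Submodule F V) (hq : Fintype.card F = q) (hn : finrank F V = n) (hk : 0 < k)
    (hkn : 2 * k ≤ n) (hr : n % k ≠ 0) (hdim : ∀ i ∈ C, finrank F (f i) = k)
    (hdisj : C.Pairwise (Disjoint on f)) :
    (C.ncard : ℝ) ≤ drakeFreemanBound q n k := by
  have hinj : C.InjOn f := fun i hi j hj hij => by
    by_contra hne
    have hbot := (hdisj hi hj hne).eq_bot
    rw [hij, inf_idem] at hbot
    have := hdim j hj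
    rw [hbot, finrank_bot] at this
    omega
  rw [← hinj.ncard_image, Set.ncard_eq_toFinset_card _ (hC.image f)]
  refine card_le_drakeFreemanBound hq hn hk hkn hr ?_ ?_
  · simp only [Set.Finite.mem_toFinset, Set.forall_mem_image]
    exact hdim
  · rw [Set.Finite.coe_toFinset]
    exact hinj.pairwise_image.2 hdisj

section FlagCode

variable {F : Type*} [Field F] {n : ℕ}

lemma subDist_le {U U' : Submodule F (Fin n → F)} {a : ℕ} (hU : finrank F U = a)
    (hU' : finrank F U' = a) : subDist U U' ≤ 2 * min a (n - a) := by
  have hsup := Submodule.finrank_sup_add_finrank_inf_eq U U'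
  have hle : finrank F ↥(U ⊔ U') ≤ n := (Submodule.finrank_le _).trans_eq (finrank_fin_fun F)
  have hinf : finrank F ↥(U ⊓ U') ≤ a := hU ▸ Submodule.finrank_mono inf_le_left
  rw [subDist, hU, hU']
  omega

lemma two_mul_sum_filter_eq_sum_min (A : Finset ℕ) :
    2 * ((∑ a ∈ A.filter (fun a => a ≤ n / 2), a) + ∑ a ∈ A.filter (fun a => n / 2 < a), (n - a)) =
      ∑ a : A, 2 * min (a : ℕ) (n - a) := by
  rw [sum_coe_sort A (fun a => 2 * min a (n - a)), ← mul_sum, sum_filter, sum_filter,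
    ← sum_add_distrib]
  congr 1
  refine sum_congr rfl fun a _ => ?_
  split_ifs <;> omega

lemma IsODFC.subDist_eq {A : Finset ℕ} {C : Set (A → Submodule F (Fin n → F))}
    (hC : IsODFC n A C) {𝓕 𝓕' : A → Submodule F (Fin n → F)} (h𝓕 : 𝓕 ∈ C) (h𝓕' : 𝓕' ∈ C)
    (hne : 𝓕 ≠ 𝓕') {a : ℕ} (ha : a ∈ A) : subDist (𝓕 ⟨a, ha⟩) (𝓕' ⟨a, ha⟩) = 2 * min a (n - a) := by
  obtain ⟨-, hflag, hmin⟩ := hC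
  have hle (b : A) (_ : b ∈ univ) : subDist (𝓕 b) (𝓕' b) ≤ 2 * min (b : ℕ) (n - b) :=
    subDist_le ((hflag 𝓕 h𝓕).1 b) ((hflag 𝓕' h𝓕').1 b)
  have hge : ∑ b : A, 2 * min (b : ℕ) (n - b) ≤ flagDistSet 𝓕 𝓕' := by
    rw [← two_mul_sum_filter_eq_sum_min, ← hmin]
    exact Nat.sInf_le ⟨𝓕, h𝓕, 𝓕', h𝓕', hne, rfl⟩
  exact (sum_eq_sum_iff_of_le hle).1 (le_antisymm (sum_le_sum hle) hge) _ (mem_univ _)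

lemma disjoint_of_subDist_eq {U U' : Submodule F (Fin n → F)} {k : ℕ} (hU : finrank F U = k)
    (hU' : finrank F U' = k) (h : subDist U U' = 2 * k) : Disjoint U U' := by
  have hinf : finrank F ↥(U ⊓ U') ≤ k := hU ▸ Submodule.finrank_mono inf_le_left
  rw [subDist, hU, hU'] at h
  rw [disjoint_iff, ← Submodule.finrank_eq_zero]
  omega

lemma codisjoint_of_subDist_eq {U U' : Submodule F (Fin n → F)} {k : ℕ} (hU : finrank F U = n - k)
    (hU' : finrank F U' = n - k) (h : subDist U U' = 2 * k) : Codisjoint U U' := by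
  have hsup := Submodule.finrank_sup_add_finrank_inf_eq U U'
  have hle : finrank F ↥(U ⊔ U') ≤ n := (Submodule.finrank_le _).trans_eq (finrank_fin_fun F)
  have hinf : finrank F ↥(U ⊓ U') ≤ n - k := hU ▸ Submodule.finrank_mono inf_le_left
  rw [subDist, hU, hU'] at h
  rw [codisjoint_iff]
  exact Submodule.eq_top_of_finrank_eq (by rw [finrank_fin_fun]; omega)

end FlagCode

lemma disjoint_dualAnnihilator_of_codisjoint {R M : Type*} [CommSemiring R] [AddCommMonoid M]
    [Module R M] {U U' : Submodule R M} (h : Codisjoint U U') :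
    Disjoint U.dualAnnihilator U'.dualAnnihilator := by
  rw [disjoint_iff, ← Submodule.dualAnnihilator_sup_eq, h.eq_top, Submodule.dualAnnihilator_top]

theorem stmt_10_general {F : Type*} [Field F] [Fintype F] (q n k r : ℕ)
    (hq : Fintype.card F = q) (hk : 0 < k) (hnk : 2 * k ≤ n)
    (A : Finset ℕ)
    (hAk : k ∈ A ∨ n - k ∈ A)
    (hr : n % k = r) (hr0 : r ≠ 0)
    (C : Set (A → Submodule F (Fin n → F))) (hC : IsODFC n A C) :
    (C.ncard : ℝ) ≤ ((q : ℝ) ^ n - (q : ℝ) ^ r) / ((q : ℝ) ^ k - 1)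
      - (⌊(Real.sqrt (4 * (q : ℝ) ^ k * ((q : ℝ) ^ k - (q : ℝ) ^ r) + 1)
          - (2 * (q : ℝ) ^ k - 2 * (q : ℝ) ^ r + 1)) / 2⌋ : ℝ) - 1 := by
  subst hr
  have hdim {a : ℕ} (ha : a ∈ A) {𝓕} (h𝓕 : 𝓕 ∈ C) : finrank F (𝓕 ⟨a, ha⟩) = a :=
    (hC.2.1 𝓕 h𝓕).1 _
  rcases hAk with hkA | hkA
  · refine ncard_le_drakeFreemanBound C.toFinite (fun 𝓕 => 𝓕 ⟨k, hkA⟩) hq (finrank_fin_fun F)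
      hk hnk hr0 (fun 𝓕 => hdim hkA) fun 𝓕 h𝓕 𝓕' h𝓕' hne => ?_
    refine disjoint_of_subDist_eq (hdim hkA h𝓕) (hdim hkA h𝓕') ?_
    rw [hC.subDist_eq h𝓕 h𝓕' hne, min_eq_left (by omega)]
  · refine ncard_le_drakeFreemanBound C.toFinite (fun 𝓕 => (𝓕 ⟨n - k, hkA⟩).dualAnnihilator) hq
      (by rw [Subspace.dual_finrank_eq, finrank_fin_fun]) hk hnk hr0 (fun 𝓕 h𝓕 => ?_)
      fun 𝓕 h𝓕 𝓕' h𝓕' hne => disjoint_dualAnnihilator_of_codisjoint ?_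
    · have := Subspace.finrank_add_finrank_dualAnnihilator_eq (𝓕 ⟨n - k, hkA⟩)
      rw [hdim hkA h𝓕, finrank_fin_fun] at this
      omega
    · refine codisjoint_of_subDist_eq (hdim hkA h𝓕) (hdim hkA h𝓕') ?_
      rw [hC.subDist_eq h𝓕 h𝓕' hne, min_eq_right (by omega), Nat.sub_sub_self (by omega)]

theorem stmt_10 {F : Type*} [Field F] [Fintype F] (q n k r : ℕ)
    (hq : Fintype.card F = q) (hn : 0 < n) (hk : 0 < k) (hnk : 2 * k ≤ n)
    (A : Finset ℕ)
    (hA : A ⊆ Finset.Icc 1 k ∪ Finset.Icc (n - k) (n - 1))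
    (hAk : k ∈ A ∨ n - k ∈ A)
    (hr : n % k = r) (hr0 : r ≠ 0) (hrk : r < k)
    (C : Set (A → Submodule F (Fin n → F))) (hC : IsODFC n A C) :
    (C.ncard : ℝ) ≤ ((q : ℝ) ^ n - (q : ℝ) ^ r) / ((q : ℝ) ^ k - 1)
      - (⌊(Real.sqrt (4 * (q : ℝ) ^ k * ((q : ℝ) ^ k - (q : ℝ) ^ r) + 1)
          - (2 * (q : ℝ) ^ k - 2 * (q : ℝ) ^ r + 1)) / 2⌋ : ℝ) - 1 :=
  stmt_10_general q n k r hq hk hnk A hAk hr hr0 C hC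
end

section
/- Let q be a prime power and n, k positive integers with n ≥ 2k. Let A ⊆ {1, 2, …, k, n−k, …, n−1} with A ∩ {k, n−k} ≠ ∅, and write n ≡ r (mod k) with 0 ≤ r < k. Then there exists an (n, A)_q optimum distance flag code of size (q^n − q^{k+r})/(q^k − 1) + 1; in particular A_q(n, A) ≥ (q^n − q^{k+r})/(q^k − 1) + 1. -/
open Module

universe u

open Polynomial in
theorem exists_field_ext (F : Type u) [Field F] [Fintype F] {d : ℕ} (hd : d ≠ 0) :
    ∃ (L : Type u) (_fL : Field L) (_aL : Algebra F L) (_fd : FiniteDimensional F L),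
      Module.finrank F L = d ∧ Nat.card L = Fintype.card F ^ d := by
  classical
  have hq1 : 1 < Fintype.card F := Fintype.one_lt_card
  obtain ⟨p, hcp⟩ := CharP.exists F
  haveI : CharP F p := hcp
  obtain ⟨e, hp, hqe⟩ := FiniteField.card F p
  haveI : Fact p.Prime := ⟨hp⟩
  set q : ℕ := Fintype.card F with hqdef
  set g : F[X] := X ^ q ^ d - X with hgdef
  have hgne : g ≠ 0 := FiniteField.X_pow_card_pow_sub_X_ne_zero F hd hq1
  have hdeg : g.natDegree = q ^ d := FiniteField.X_pow_card_pow_sub_X_natDegree_eq F hd hq1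
  have hpdvd : p ∣ q ^ d := by
    rw [hqe]
    exact dvd_pow (dvd_pow_self p e.2.ne') hd
  have hsep : g.Separable := galois_poly_separable p (q ^ d) hpdvd
  refine ⟨g.SplittingField, inferInstance, inferInstance, inferInstance, ?_⟩
  haveI : Finite g.SplittingField := Module.finite_of_finite F
  haveI : Fintype g.SplittingField := Fintype.ofFinite _
  haveI : CharP g.SplittingField p :=
    charP_of_injective_algebraMap (algebraMap F g.SplittingField).injective p
  have key : Fintype.card (g.rootSet g.SplittingField) = g.natDegree :=
    card_rootSet_eq_natDegree hsep (SplittingField.splits g)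
  have hqd : q ^ d = p ^ (e * d) := by rw [hqe, ← pow_mul]
  have hmem : ∀ x : g.SplittingField, x ^ q ^ d = x := by
    intro x
    have hx : x ∈ (⊤ : Subalgebra F g.SplittingField) := trivial
    rw [← SplittingField.adjoin_rootSet g, Algebra.mem_adjoin_iff] at hx
    refine Subring.closure_induction ?_ ?_ ?_ ?_ ?_ ?_ hx
    · rintro y (⟨s, rfl⟩ | hy)
      · rw [← map_pow, FiniteField.pow_card_pow]
      · rw [mem_rootSet_of_ne hgne] at hy
        simp only [hgdef, map_sub, map_pow, aeval_X] at hy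
        exact sub_eq_zero.mp hy
    · exact zero_pow (by positivity)
    · exact one_pow _
    · intro x y _ _ hx hy
      rw [hqd] at hx hy ⊢
      rw [add_pow_char_pow, hx, hy]
    · intro x _ hx
      rw [hqd] at hx ⊢
      rw [neg_pow, neg_one_pow_char_pow, hx]
      ring
    · intro x y _ _ hx hy
      rw [mul_pow, hx, hy]
  have huniv : g.rootSet g.SplittingField = Set.univ := by
    rw [Set.eq_univ_iff_forall]
    intro x
    rw [mem_rootSet_of_ne hgne]
    simp only [hgdef, map_sub, map_pow, aeval_X]
    rw [hmem x, sub_self]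
  have hcardL : Fintype.card g.SplittingField = q ^ d := by
    rw [← hdeg, ← key]
    exact (Fintype.card_congr ((Equiv.setCongr huniv).trans (Equiv.Set.univ _))).symm
  have hfr : Fintype.card g.SplittingField = q ^ Module.finrank F g.SplittingField :=
    card_eq_pow_finrank
  constructor
  · have := hfr.symm.trans hcardL
    exact Nat.pow_right_injective hq1 this
  · rw [Nat.card_eq_fintype_card, hcardL]

section ProdLemmas

variable {F : Type*} [Field F] {M N : Type*} [AddCommGroup M] [AddCommGroup N]
  [Module F M] [Module F N]

lemma graph_inf_botprod (f : M →ₗ[F] N) (Y : Submodule F N) :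
    LinearMap.graph f ⊓ (⊥ : Submodule F M).prod Y = ⊥ := by
  ext ⟨x, y⟩
  simp only [Submodule.mem_inf, LinearMap.mem_graph_iff, Submodule.mem_prod,
    Submodule.mem_bot, Prod.mk_eq_zero]
  constructor
  · rintro ⟨h1, h2, h3⟩
    subst h2
    simp only [map_zero] at h1
    exact ⟨rfl, h1⟩
  · rintro ⟨rfl, rfl⟩
    simp [Y.zero_mem]

lemma botprod_inf_botprod {Y Y' : Submodule F N} (h : Y ⊓ Y' = ⊥) :
    ((⊥ : Submodule F M).prod Y) ⊓ ((⊥ : Submodule F M).prod Y') = ⊥ := by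
  ext ⟨x, y⟩
  simp only [Submodule.mem_inf, Submodule.mem_prod, Submodule.mem_bot, Prod.mk_eq_zero]
  constructor
  · rintro ⟨⟨rfl, h1⟩, -, h2⟩
    refine ⟨rfl, ?_⟩
    have : y ∈ Y ⊓ Y' := ⟨h1, h2⟩
    rwa [h, Submodule.mem_bot] at this
  · rintro ⟨rfl, rfl⟩
    simp [Y.zero_mem, Y'.zero_mem]

lemma graph_sup_botprod_top (f : M →ₗ[F] N) :
    LinearMap.graph f ⊔ (⊥ : Submodule F M).prod ⊤ = ⊤ := by
  rw [eq_top_iff]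
  rintro ⟨x, y⟩ -
  rw [Submodule.mem_sup]
  refine ⟨(x, f x), by simp, (0, y - f x), by simp, by simp⟩

lemma botprodtop_sup_topprod (Y : Submodule F N) :
    ((⊥ : Submodule F M).prod ⊤) ⊔ (⊤ : Submodule F M).prod Y = ⊤ := by
  rw [eq_top_iff]
  rintro ⟨x, y⟩ -
  rw [Submodule.mem_sup]
  exact ⟨(0, y), by simp, (x, 0), by simp [Y.zero_mem], by simp⟩

lemma topprod_sup_topprod {Y Y' : Submodule F N} (h : Y ⊔ Y' = ⊤) :
    ((⊤ : Submodule F M).prod Y) ⊔ ((⊤ : Submodule F M).prod Y') = ⊤ := by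
  rw [eq_top_iff]
  rintro ⟨x, y⟩ -
  have hy : y ∈ Y ⊔ Y' := by rw [h]; trivial
  rw [Submodule.mem_sup] at hy
  obtain ⟨a, ha, b, hb, rfl⟩ := hy
  rw [Submodule.mem_sup]
  exact ⟨(x, a), by simp [ha], (0, b), by simp [hb], by simp⟩

lemma botprod_le_topprod {Y Y' : Submodule F N} (h : Y ≤ Y') :
    (⊥ : Submodule F M).prod Y ≤ (⊤ : Submodule F M).prod Y' := by
  rintro ⟨x, y⟩ ⟨-, hy⟩
  exact ⟨trivial, h hy⟩

lemma finrank_graph (f : M →ₗ[F] N) [FiniteDimensional F M] :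
    finrank F (LinearMap.graph f) = finrank F M := by
  rw [LinearMap.graph_eq_range_prod]
  have hinj : Function.Injective (LinearMap.id.prod f) := fun a b hab => by
    simpa using congrArg Prod.fst hab
  exact LinearMap.finrank_range_of_inj hinj

lemma finrank_botprod (Y : Submodule F N) :
    finrank F ((⊥ : Submodule F M).prod Y) = finrank F Y := by
  rw [← Submodule.map_inr]
  exact (Y.equivMapOfInjective _ LinearMap.inr_injective).finrank_eq.symm

lemma finrank_topprodbot (Y : Submodule F M) :
    finrank F (Y.prod (⊥ : Submodule F N)) = finrank F Y := by
  rw [← Submodule.map_inl]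
  exact (Y.equivMapOfInjective _ LinearMap.inl_injective).finrank_eq.symm

lemma prod_eq_sup (p : Submodule F M) (q : Submodule F N) :
    p.prod q = (p.prod ⊥) ⊔ ((⊥ : Submodule F M).prod q) := by
  apply le_antisymm
  · rintro ⟨x, y⟩ ⟨hx, hy⟩
    rw [Submodule.mem_sup]
    exact ⟨(x, 0), ⟨hx, rfl⟩, (0, y), ⟨rfl, hy⟩, by simp⟩
  · refine sup_le ?_ ?_
    · rintro ⟨x, y⟩ ⟨hx, hy⟩
      exact ⟨hx, (Submodule.mem_bot F).mp hy ▸ q.zero_mem⟩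
    · rintro ⟨x, y⟩ ⟨hx, hy⟩
      exact ⟨(Submodule.mem_bot F).mp hx ▸ p.zero_mem, hy⟩

lemma finrank_prod' [FiniteDimensional F M] [FiniteDimensional F N]
    (p : Submodule F M) (q : Submodule F N) :
    finrank F (p.prod q) = finrank F p + finrank F q := by
  have hinf : (p.prod (⊥ : Submodule F N)) ⊓ ((⊥ : Submodule F M).prod q) = ⊥ := by
    ext ⟨x, y⟩
    simp only [Submodule.mem_inf, Submodule.mem_prod, Submodule.mem_bot, Prod.mk_eq_zero]
    constructor
    · rintro ⟨⟨-, h1⟩, h2, -⟩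
      exact ⟨h2, h1⟩
    · rintro ⟨rfl, rfl⟩
      simp [p.zero_mem, q.zero_mem]
  have := Submodule.finrank_sup_add_finrank_inf_eq (p.prod (⊥ : Submodule F N))
    ((⊥ : Submodule F M).prod q)
  rw [hinf, finrank_bot, add_zero, ← prod_eq_sup, finrank_topprodbot, finrank_botprod] at this
  exact this

end ProdLemmas

section Between

variable {F : Type*} [Field F] {V : Type*} [AddCommGroup V] [Module F V]
  [FiniteDimensional F V]

theorem exists_between_submodule {p q : Submodule F V} (hpq : p ≤ q) {j : ℕ}
    (h1 : finrank F p ≤ j) (h2 : j ≤ finrank F q) :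
    ∃ s, p ≤ s ∧ s ≤ q ∧ finrank F s = j := by
  induction j with
  | zero => exact ⟨p, le_rfl, hpq, by omega⟩
  | succ j ih =>
    by_cases hj : finrank F p ≤ j
    · obtain ⟨s, hps, hsq, hs⟩ := ih hj (le_trans (Nat.le_succ j) h2)
      have hlt : s < q := lt_of_le_of_ne hsq (by rintro rfl; omega)
      obtain ⟨x, hxq, hxs⟩ := SetLike.exists_of_lt hlt
      have hx0 : x ≠ 0 := by rintro rfl; exact hxs s.zero_mem
      refine ⟨s ⊔ Submodule.span F {x}, le_trans hps le_sup_left,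
        sup_le hsq (Submodule.span_le.mpr (by simpa using hxq)), ?_⟩
      have hinf : s ⊓ Submodule.span F {x} = ⊥ := by
        rw [eq_bot_iff]
        rintro y hy
        rw [Submodule.mem_inf] at hy
        obtain ⟨hy1, hy2⟩ := hy
        rw [Submodule.mem_span_singleton] at hy2
        obtain ⟨c, rfl⟩ := hy2
        rcases eq_or_ne c 0 with rfl | hc
        · simp
        · have : x ∈ s := by
            rw [← inv_smul_smul₀ hc x]
            exact s.smul_mem _ hy1
          exact absurd this hxs
      have := Submodule.finrank_sup_add_finrank_inf_eq s (Submodule.span F {x})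
      rw [hinf, finrank_bot, add_zero, hs, finrank_span_singleton hx0] at this
      exact this
    · exact ⟨p, le_rfl, hpq, by omega⟩

end Between

section KeySup

variable {F : Type*} [Field F] {M : Type*} [AddCommGroup M] [Module F M]
  {L : Type*} [Field L] [Algebra F L]

lemma key_sup (ψ : M →ₗ[F] L) (H : Submodule F L)
    (hdec : ∀ z : L, ∃ x h, h ∈ H ∧ z = ψ x + h) {α β : L} (hne : α ≠ β) :
    (LinearMap.graph ((LinearMap.mulLeft F α).comp ψ) ⊔
      (⊥ : Submodule F M).prod (H.map (LinearMap.mulLeft F α))) ⊔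
    (LinearMap.graph ((LinearMap.mulLeft F β).comp ψ) ⊔
      (⊥ : Submodule F M).prod (H.map (LinearMap.mulLeft F β))) = ⊤ := by
  have hγ : α - β ≠ 0 := sub_ne_zero.mpr hne
  rw [eq_top_iff]
  rintro ⟨m, l⟩ -
  obtain ⟨x₀, h₀, hh₀, hd⟩ := hdec ((α - β)⁻¹ * (l - β * ψ m))
  rw [Submodule.mem_sup]
  refine ⟨(x₀, α * ψ x₀ + α * h₀), ?_, (m - x₀, β * ψ (m - x₀) - β * h₀), ?_, ?_⟩
  · rw [Submodule.mem_sup]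
    refine ⟨(x₀, α * ψ x₀), by simp [LinearMap.mem_graph_iff], (0, α * h₀),
      ⟨by simp, ⟨h₀, hh₀, rfl⟩⟩, by simp⟩
  · rw [Submodule.mem_sup]
    refine ⟨(m - x₀, β * ψ (m - x₀)), by simp [LinearMap.mem_graph_iff], (0, -(β * h₀)),
      ⟨by simp, ⟨-h₀, H.neg_mem hh₀, by simp [LinearMap.mulLeft_apply]⟩⟩,
      by rw [Prod.mk_add_mk]; exact congrArg₂ Prod.mk (by abel) (by ring)⟩
  · have h2 : α * ψ x₀ + α * h₀ + (β * ψ (m - x₀) - β * h₀) = l := by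
      rw [map_sub]
      have hh : α * ψ x₀ + α * h₀ + (β * (ψ m - ψ x₀) - β * h₀)
          = (α - β) * (ψ x₀ + h₀) + β * ψ m := by ring
      rw [hh, ← hd, ← mul_assoc, mul_inv_cancel₀ hγ, one_mul]
      ring
    rw [Prod.mk_add_mk]
    exact congrArg₂ Prod.mk (by abel) h2

lemma key_sup2 (ψ : M →ₗ[F] L) (H : Submodule F L)
    (hdec : ∀ z : L, ∃ x h, h ∈ H ∧ z = ψ x + h) {α : L} (hα : α ≠ 0)
    (Y : Submodule F L) :
    (LinearMap.graph ((LinearMap.mulLeft F α).comp ψ) ⊔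
      (⊥ : Submodule F M).prod (H.map (LinearMap.mulLeft F α))) ⊔
    (⊤ : Submodule F M).prod Y = ⊤ := by
  rw [eq_top_iff]
  rintro ⟨m, l⟩ -
  obtain ⟨x₀, h₀, hh₀, hd⟩ := hdec (α⁻¹ * l)
  have h2 : α * ψ x₀ + α * h₀ = l := by
    have : α * (ψ x₀ + h₀) = l := by
      rw [← hd, ← mul_assoc, mul_inv_cancel₀ hα, one_mul]
    rw [← this]; ring
  rw [Submodule.mem_sup]
  refine ⟨(x₀, α * ψ x₀ + α * h₀), ?_, (m - x₀, 0), ⟨trivial, Y.zero_mem⟩, ?_⟩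
  · rw [Submodule.mem_sup]
    refine ⟨(x₀, α * ψ x₀), by simp [LinearMap.mem_graph_iff], (0, α * h₀),
      ⟨by simp, ⟨h₀, hh₀, rfl⟩⟩, by simp⟩
  · rw [Prod.mk_add_mk]
    exact congrArg₂ Prod.mk (by abel) (by rw [h2, add_zero])

end KeySup

theorem exists_fam (F : Type u) [Field F] [Fintype F] (k r : ℕ) (hk : 0 < k) (hrk : r < k) :
    ∀ (t : ℕ) (V : Type u) [AddCommGroup V] [Module F V] [FiniteDimensional F V],
      Module.finrank F V = k + r + t * k →
      ∃ (Pfam : Finset (Submodule F V × Submodule F V)) (Uinf Z : Submodule F V),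
        Pfam.card * (Fintype.card F ^ k - 1) + Fintype.card F ^ (k + r)
            = Fintype.card F ^ (k + r + t * k) ∧
        (∀ p ∈ Pfam, finrank F p.1 = k ∧ finrank F p.2 = r + t * k ∧ p.1 ≤ p.2) ∧
        (∀ p ∈ Pfam, ∀ p' ∈ Pfam, p ≠ p' → p.1 ⊓ p'.1 = ⊥ ∧ p.2 ⊔ p'.2 = ⊤) ∧
        finrank F Uinf = k ∧ (∀ p ∈ Pfam, Uinf ⊓ p.1 = ⊥) ∧
        finrank F Z = r + t * k ∧ (1 ≤ t → Uinf ≤ Z) ∧ (∀ p ∈ Pfam, Z ⊔ p.2 = ⊤) := by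
  classical
  intro t
  induction t with
  | zero =>
    intro V _ _ _ hV
    obtain ⟨Uinf, -, -, hUinf⟩ := exists_between_submodule
      (bot_le : (⊥ : Submodule F V) ≤ ⊤) (j := k) (by simp)
      (by rw [finrank_top, hV]; omega)
    obtain ⟨Z, -, -, hZ⟩ := exists_between_submodule
      (bot_le : (⊥ : Submodule F V) ≤ ⊤) (j := r) (by simp)
      (by rw [finrank_top, hV]; omega)
    exact ⟨∅, Uinf, Z, by simp, by simp, by simp, hUinf, by simp,
      by simpa using hZ, by omega, by simp⟩
  | succ t ih =>
    intro V _ _ _ hV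
    set q : ℕ := Fintype.card F with hq
    have hq1 : 1 < q := Fintype.one_lt_card
    set d : ℕ := k + r + t * k with hd
    have hdsum : r + (t + 1) * k = d := by rw [hd]; ring
    obtain ⟨L, _, _, _, hLrank, hLcard⟩ := exists_field_ext F (d := d) (by omega)
    obtain ⟨P0, U0, Z0, hcount0, hmem0, hpair0, hU0rank, hU0inf, hZ0rank, hU0Z0, hZ0sup⟩ :=
      ih L hLrank
    haveI : Finite L := Module.finite_of_finite F
    haveI : Fintype L := Fintype.ofFinite _
    have hLcard' : Fintype.card L = q ^ d := by rw [← Nat.card_eq_fintype_card, hLcard]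
    have hkd : k ≤ finrank F L := by rw [hLrank]; omega
    -- the injection ψ : (Fin k → F) →ₗ[F] L
    set pad : (Fin k → F) →ₗ[F] (Fin (finrank F L) → F) :=
      LinearMap.pi (fun j => if h : (j : ℕ) < k then LinearMap.proj (⟨j, h⟩ : Fin k) else 0)
      with hpad
    have hpadapp : ∀ (v : Fin k → F) (j : Fin (finrank F L)) (h : (j : ℕ) < k),
        pad v j = v ⟨j, h⟩ := by
      intro v j h
      simp [hpad, LinearMap.pi_apply, dif_pos h]
    have hpadinj : Function.Injective pad := by
      intro u v huv
      funext i
      have := congrFun huv ⟨(i : ℕ), lt_of_lt_of_le i.isLt hkd⟩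
      rwa [hpadapp u _ i.isLt, hpadapp v _ i.isLt] at this
    set ψ : (Fin k → F) →ₗ[F] L :=
      ((Module.finBasis F L).equivFun.symm.toLinearMap).comp pad with hψdef
    have hψinj : Function.Injective ψ := by
      rw [hψdef]
      rw [LinearMap.coe_comp]
      exact ((Module.finBasis F L).equivFun.symm.injective).comp hpadinj
    set K : Submodule F L := LinearMap.range ψ with hK
    have hKrank : finrank F K = k := by
      rw [hK, LinearMap.finrank_range_of_inj hψinj, Module.finrank_fin_fun]
    obtain ⟨H, hH⟩ := Submodule.exists_isCompl K
    have hKH : K ⊔ H = ⊤ := hH.codisjoint.eq_top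
    have hHrank : finrank F H = d - k := by
      have h2 := Submodule.finrank_add_eq_of_isCompl hH
      rw [hKrank, hLrank] at h2
      omega
    have hdec : ∀ z : L, ∃ x h, h ∈ H ∧ z = ψ x + h := by
      intro z
      have hz : z ∈ K ⊔ H := by rw [hKH]; trivial
      rw [Submodule.mem_sup] at hz
      obtain ⟨y, hy, h, hh, rfl⟩ := hz
      obtain ⟨x, rfl⟩ := hy
      exact ⟨x, h, hh, rfl⟩
    -- the two families on the model space (Fin k → F) × L
    set Uf : L → Submodule F ((Fin k → F) × L) :=
      fun α => LinearMap.graph ((LinearMap.mulLeft F α).comp ψ) with hUf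
    set Wf : L → Submodule F ((Fin k → F) × L) :=
      fun α => if α = 0 then (⊤ : Submodule F (Fin k → F)).prod Z0
        else Uf α ⊔ (⊥ : Submodule F (Fin k → F)).prod (H.map (LinearMap.mulLeft F α))
      with hWf
    have hUfeq : ∀ α, Uf α = LinearMap.graph ((LinearMap.mulLeft F α).comp ψ) := by
      intro α; simp only [hUf]
    have hWfzero : Wf 0 = (⊤ : Submodule F (Fin k → F)).prod Z0 := by
      simp only [hWf, if_pos]
    have hWfne : ∀ α : L, α ≠ 0 → Wf α = LinearMap.graph ((LinearMap.mulLeft F α).comp ψ) ⊔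
        (⊥ : Submodule F (Fin k → F)).prod (H.map (LinearMap.mulLeft F α)) := by
      intro α hα; simp only [hWf, if_neg hα, hUf]
    -- basic properties of Uf
    have hUfrank : ∀ α, finrank F (Uf α) = k := by
      intro α
      rw [hUfeq α, finrank_graph, Module.finrank_fin_fun]
    have hUinfαβ : ∀ {α β : L}, α ≠ β → Uf α ⊓ Uf β = ⊥ := by
      intro α β hne
      rw [eq_bot_iff]
      rintro ⟨x, y⟩ hxy
      rw [Submodule.mem_inf] at hxy
      obtain ⟨h1, h2⟩ := hxy
      rw [hUfeq α, LinearMap.mem_graph_iff] at h1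
      rw [hUfeq β, LinearMap.mem_graph_iff] at h2
      simp only [LinearMap.coe_comp, Function.comp_apply, LinearMap.mulLeft_apply] at h1 h2
      have hx : ψ x = 0 := by
        have h3 : (α - β) * ψ x = 0 := by rw [sub_mul, ← h1, ← h2, sub_self]
        rcases mul_eq_zero.mp h3 with h | h
        · exact (sub_ne_zero.mpr hne h).elim
        · exact h
      have hx0 : x = 0 := hψinj (by rw [hx, map_zero])
      have hy0 : y = 0 := by rw [h1, hx, mul_zero]
      simp [hx0, hy0, Prod.ext_iff]
    have hUfnebot : ∀ α, Uf α ≠ ⊥ := by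
      intro α h
      have h2 := hUfrank α
      rw [h, finrank_bot] at h2
      omega
    have hUfinj : Function.Injective Uf := by
      intro α β h
      by_contra hne
      have h2 := hUinfαβ hne
      rw [h, inf_idem] at h2
      exact hUfnebot β h2
    have hUfliftinf : ∀ (α : L) (Y : Submodule F L),
        Uf α ⊓ (⊥ : Submodule F (Fin k → F)).prod Y = ⊥ := by
      intro α Y
      rw [hUfeq α]
      exact graph_inf_botprod _ Y
    -- W sup properties
    have hWW : ∀ {α β : L}, α ≠ β → Wf α ⊔ Wf β = ⊤ := by
      intro α β hne
      rcases eq_or_ne α 0 with rfl | hα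
      · rw [hWfzero, hWfne β (Ne.symm hne), sup_comm]
        exact key_sup2 ψ H hdec (Ne.symm hne) Z0
      · rcases eq_or_ne β 0 with rfl | hβ
        · rw [hWfzero, hWfne α hα]
          exact key_sup2 ψ H hdec hα Z0
        · rw [hWfne α hα, hWfne β hβ]
          exact key_sup ψ H hdec hne
    have hWlift : ∀ (α : L), ∀ p0 ∈ P0,
        Wf α ⊔ (⊤ : Submodule F (Fin k → F)).prod p0.2 = ⊤ := by
      intro α p0 hp0
      rcases eq_or_ne α 0 with rfl | hα
      · rw [hWfzero]
        exact topprod_sup_topprod (hZ0sup p0 hp0)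
      · rw [hWfne α hα]
        exact key_sup2 ψ H hdec hα p0.2
    have hUfleWf : ∀ α, Uf α ≤ Wf α := by
      intro α
      rcases eq_or_ne α 0 with rfl | hα
      · rw [hWfzero, hUfeq 0]
        rintro ⟨x, y⟩ hxy
        rw [LinearMap.mem_graph_iff] at hxy
        simp only [LinearMap.coe_comp, Function.comp_apply, LinearMap.mulLeft_apply,
          zero_mul] at hxy
        exact ⟨trivial, by rw [hxy]; exact Z0.zero_mem⟩
      · rw [hWfne α hα, hUfeq α]
        exact le_sup_left
    have hWfrank : ∀ α, finrank F (Wf α) = d := by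
      intro α
      rcases eq_or_ne α 0 with rfl | hα
      · rw [hWfzero, finrank_prod', finrank_top, Module.finrank_fin_fun, hZ0rank]
        omega
      · rw [hWfne α hα]
        have hmulinj : Function.Injective (LinearMap.mulLeft F α) := by
          intro a b hab
          simp only [LinearMap.mulLeft_apply] at hab
          exact mul_left_cancel₀ hα hab
        have hr2 : finrank F (H.map (LinearMap.mulLeft F α)) = d - k :=
          (H.equivMapOfInjective _ hmulinj).finrank_eq.symm.trans hHrank
        have h3 := Submodule.finrank_sup_add_finrank_inf_eq
          (LinearMap.graph ((LinearMap.mulLeft F α).comp ψ))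
          ((⊥ : Submodule F (Fin k → F)).prod (H.map (LinearMap.mulLeft F α)))
        rw [graph_inf_botprod, finrank_bot, add_zero, finrank_graph,
          Module.finrank_fin_fun, finrank_botprod, hr2] at h3
        rw [h3]
        omega
    -- linear equivalence to V
    have hVrank : finrank F ((Fin k → F) × L) = finrank F V := by
      rw [Module.finrank_prod, Module.finrank_fin_fun, hLrank, hV, hd]
      ring
    obtain ⟨e⟩ := FiniteDimensional.nonempty_linearEquiv_of_finrank_eq hVrank
    set eL : ((Fin k → F) × L) →ₗ[F] V := e.toLinearMap with heL
    have hrankmap : ∀ X : Submodule F ((Fin k → F) × L),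
        finrank F (X.map eL) = finrank F X := fun X => LinearEquiv.finrank_map_eq e X
    have hinfmap : ∀ X Y : Submodule F ((Fin k → F) × L), X ⊓ Y = ⊥ →
        (X.map eL) ⊓ (Y.map eL) = ⊥ := by
      intro X Y h
      rw [← Submodule.map_inf eL e.injective, h, Submodule.map_bot]
    have hsupmap : ∀ X Y : Submodule F ((Fin k → F) × L), X ⊔ Y = ⊤ →
        (X.map eL) ⊔ (Y.map eL) = ⊤ := by
      intro X Y h
      rw [← Submodule.map_sup, h, Submodule.map_top, heL]
      simp
    have hmapinj : Function.Injective (Submodule.map eL) :=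
      Submodule.map_injective_of_injective e.injective
    set liftp : (Submodule F L × Submodule F L) → (Submodule F V × Submodule F V) :=
      fun p => (((⊥ : Submodule F (Fin k → F)).prod p.1).map eL,
        ((⊤ : Submodule F (Fin k → F)).prod p.2).map eL) with hliftp
    set PV : Finset (Submodule F V × Submodule F V) :=
      ((Finset.univ : Finset L).image fun α => ((Uf α).map eL, (Wf α).map eL))
        ∪ P0.image liftp with hPV
    refine ⟨PV, ((⊥ : Submodule F (Fin k → F)).prod U0).map eL,
      ((⊥ : Submodule F (Fin k → F)).prod ⊤).map eL, ?_, ?_, ?_, ?_, ?_, ?_, ?_, ?_⟩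
    · -- cardinality count
      have hinj1 : Function.Injective (fun α : L => ((Uf α).map eL, (Wf α).map eL)) := by
        intro α β h
        exact hUfinj (hmapinj (congrArg Prod.fst h))
      have hinj2 : Function.Injective liftp := by
        intro p p' h
        rw [hliftp] at h
        have h1 : p.1 = p'.1 := by
          have h2 := hmapinj (congrArg Prod.fst h)
          have h3 := congrArg (Submodule.comap (LinearMap.inr F (Fin k → F) L)) h2
          rwa [Submodule.prod_comap_inr, Submodule.prod_comap_inr] at h3
        have h2 : p.2 = p'.2 := by
          have h2 := hmapinj (congrArg Prod.snd h)
          have h3 := congrArg (Submodule.comap (LinearMap.inr F (Fin k → F) L)) h2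
          rwa [Submodule.prod_comap_inr, Submodule.prod_comap_inr] at h3
        exact Prod.ext h1 h2
      have hdisj : Disjoint ((Finset.univ : Finset L).image
          fun α => ((Uf α).map eL, (Wf α).map eL)) (P0.image liftp) := by
        rw [Finset.disjoint_left]
        rintro x hx1 hx2
        obtain ⟨α, -, rfl⟩ := Finset.mem_image.mp hx1
        obtain ⟨p0, -, hpeq⟩ := Finset.mem_image.mp hx2
        have h1 : ((⊥ : Submodule F (Fin k → F)).prod p0.1).map eL = (Uf α).map eL :=
          congrArg Prod.fst hpeq
        have h2 := hmapinj h1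
        have h3 := hUfliftinf α p0.1
        rw [← h2, inf_idem] at h3
        exact hUfnebot α (h2.symm.trans h3)
      rw [hPV, Finset.card_union_of_disjoint hdisj, Finset.card_image_of_injective _ hinj1,
        Finset.card_image_of_injective _ hinj2, Finset.card_univ, hLcard']
      obtain ⟨Q, hQ⟩ : ∃ Q, q ^ k = Q + 1 :=
        ⟨q ^ k - 1, by have : 1 ≤ q ^ k := Nat.one_le_pow _ _ (by omega); omega⟩
      have hqd : q ^ d * q ^ k = q ^ (k + r + (t + 1) * k) := by
        rw [← pow_add]
        congr 1
        omega
      calc (q ^ d + P0.card) * (q ^ k - 1) + q ^ (k + r)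
          = q ^ d * (q ^ k - 1) + (P0.card * (q ^ k - 1) + q ^ (k + r)) := by ring
        _ = q ^ d * (q ^ k - 1) + q ^ d := by rw [hcount0]
        _ = q ^ d * q ^ k := by rw [hQ, Nat.add_sub_cancel, Nat.mul_succ]
        _ = _ := hqd
    · -- individual membership conditions
      rintro p hp
      rw [hPV, Finset.mem_union] at hp
      rcases hp with hp | hp
      · obtain ⟨α, -, rfl⟩ := Finset.mem_image.mp hp
        dsimp only
        refine ⟨by rw [hrankmap, hUfrank], by rw [hrankmap, hWfrank]; omega, ?_⟩
        exact Submodule.map_mono (hUfleWf α)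
      · obtain ⟨p0, hp0, rfl⟩ := Finset.mem_image.mp hp
        obtain ⟨ha, hb, hc⟩ := hmem0 p0 hp0
        refine ⟨?_, ?_, ?_⟩
        · rw [hrankmap, finrank_botprod, ha]
        · rw [hrankmap, finrank_prod', finrank_top, Module.finrank_fin_fun, hb]
          omega
        · exact Submodule.map_mono (botprod_le_topprod hc)
    · -- pairwise conditions
      rintro p hp p' hp' hne
      rw [hPV, Finset.mem_union] at hp hp'
      rcases hp with hp | hp <;> rcases hp' with hp' | hp'
      · obtain ⟨α, -, rfl⟩ := Finset.mem_image.mp hp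
        obtain ⟨β, -, rfl⟩ := Finset.mem_image.mp hp'
        have hαβ : α ≠ β := fun h => hne (by rw [h])
        exact ⟨hinfmap _ _ (hUinfαβ hαβ), hsupmap _ _ (hWW hαβ)⟩
      · obtain ⟨α, -, rfl⟩ := Finset.mem_image.mp hp
        obtain ⟨p0, hp0, rfl⟩ := Finset.mem_image.mp hp'
        dsimp only [hliftp]
        exact ⟨hinfmap _ _ (hUfliftinf α p0.1), hsupmap _ _ (hWlift α p0 hp0)⟩
      · obtain ⟨p0, hp0, rfl⟩ := Finset.mem_image.mp hp
        obtain ⟨α, -, rfl⟩ := Finset.mem_image.mp hp'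
        dsimp only [hliftp]
        constructor
        · rw [inf_comm]
          exact hinfmap _ _ (hUfliftinf α p0.1)
        · rw [sup_comm]
          exact hsupmap _ _ (hWlift α p0 hp0)
      · obtain ⟨p0, hp0, rfl⟩ := Finset.mem_image.mp hp
        obtain ⟨p1, hp1, rfl⟩ := Finset.mem_image.mp hp'
        have hps : p0 ≠ p1 := fun h => hne (by rw [h])
        obtain ⟨hi, hs⟩ := hpair0 p0 hp0 p1 hp1 hps
        exact ⟨hinfmap _ _ (botprod_inf_botprod hi), hsupmap _ _ (topprod_sup_topprod hs)⟩
    · -- rank of Uinf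
      rw [hrankmap, finrank_botprod, hU0rank]
    · -- Uinf meets everything trivially
      rintro p hp
      rw [hPV, Finset.mem_union] at hp
      rcases hp with hp | hp
      · obtain ⟨α, -, rfl⟩ := Finset.mem_image.mp hp
        dsimp only
        refine hinfmap _ _ ?_
        rw [inf_comm]
        exact hUfliftinf α U0
      · obtain ⟨p0, hp0, rfl⟩ := Finset.mem_image.mp hp
        exact hinfmap _ _ (botprod_inf_botprod (hU0inf p0 hp0))
    · -- rank of Z
      rw [hrankmap, finrank_botprod, finrank_top, hLrank]
      omega
    · -- Uinf ≤ Z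
      intro _
      refine Submodule.map_mono ?_
      rintro ⟨x, y⟩ ⟨h1, h2⟩
      exact ⟨h1, trivial⟩
    · -- Z sup conditions
      rintro p hp
      rw [hPV, Finset.mem_union] at hp
      rcases hp with hp | hp
      · obtain ⟨α, -, rfl⟩ := Finset.mem_image.mp hp
        dsimp only
        refine hsupmap _ _ ?_
        rcases eq_or_ne α 0 with rfl | hα
        · rw [hWfzero]
          exact botprodtop_sup_topprod Z0
        · rw [hWfne α hα]
          have h := graph_sup_botprod_top ((LinearMap.mulLeft F α).comp ψ)
          rw [eq_top_iff, ← h]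
          exact sup_le (le_sup_of_le_right le_sup_left) le_sup_left
      · obtain ⟨p0, hp0, rfl⟩ := Finset.mem_image.mp hp
        exact hsupmap _ _ (botprodtop_sup_topprod p0.2)

theorem exists_chain {F : Type*} [Field F] {V : Type*} [AddCommGroup V] [Module F V]
    [FiniteDimensional F V] {n k : ℕ} (hk : 0 < k) (hnk : 2 * k ≤ n)
    (hV : finrank F V = n) {U W : Submodule F V}
    (hU : finrank F U = k) (hW : finrank F W = n - k) (hUW : U ≤ W) :
    ∃ c : ℕ → Submodule F V, Monotone c ∧ (∀ a, a ≤ n → finrank F (c a) = a) ∧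
      c k = U ∧ c (n - k) = W ∧ (∀ a, a ≤ k → c a ≤ U) ∧ (∀ a, n - k ≤ a → W ≤ c a) := by
  classical
  set Inv : ℕ → Submodule F V → Prop := fun a s =>
    (a ≤ k → s ≤ U) ∧ (a ≤ n - k → s ≤ W) ∧ (n - k ≤ a → W ≤ s) ∧
    (a ≤ n → finrank F s = a) ∧ (n ≤ a → s = ⊤) with hInv
  have base : Inv 0 ⊥ := by
    refine ⟨fun _ => bot_le, fun _ => bot_le, fun h => absurd h (by omega),
      fun _ => finrank_bot F V, fun h => absurd h (by omega)⟩
  have step : ∀ a (s : Submodule F V), Inv a s → ∃ s', Inv (a + 1) s' ∧ s ≤ s' := by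
    intro a s hs
    obtain ⟨hs1, hs2, hs3, hs4, hs5⟩ := hs
    by_cases h1 : a + 1 ≤ k
    · obtain ⟨s', hss', hs'U, hrank⟩ := exists_between_submodule (hs1 (by omega))
        (j := a + 1) (by rw [hs4 (by omega)]; omega) (by rw [hU]; omega)
      refine ⟨s', ⟨fun _ => hs'U, fun _ => hs'U.trans hUW, fun h2 => ?_, fun _ => hrank,
        fun h2 => absurd h2 (by omega)⟩, hss'⟩
      have hUW' : U = W := Submodule.eq_of_le_of_finrank_le hUW (by rw [hU, hW]; omega)
      have hs'U2 : s' = U := Submodule.eq_of_le_of_finrank_le hs'U (by rw [hU, hrank]; omega)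
      rw [hs'U2, ← hUW']
    · by_cases h2 : a + 1 ≤ n - k
      · obtain ⟨s', hss', hs'W, hrank⟩ := exists_between_submodule (hs2 (by omega))
          (j := a + 1) (by rw [hs4 (by omega)]; omega) (by rw [hW]; omega)
        refine ⟨s', ⟨fun h => absurd h h1, fun _ => hs'W, fun h3 => ?_, fun _ => hrank,
          fun h3 => absurd h3 (by omega)⟩, hss'⟩
        have : s' = W := Submodule.eq_of_le_of_finrank_le hs'W (by rw [hW, hrank]; omega)
        rw [this]
      · by_cases h3 : a + 1 ≤ n
        · obtain ⟨s', hss', -, hrank⟩ := exists_between_submodule (le_top : s ≤ ⊤)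
            (j := a + 1) (by rw [hs4 (by omega)]; omega) (by rw [finrank_top, hV]; omega)
          refine ⟨s', ⟨fun h => absurd h h1, fun h => absurd h h2, fun _ => ?_,
            fun _ => hrank, fun h4 => ?_⟩, hss'⟩
          · exact (hs3 (by omega)).trans hss'
          · exact Submodule.eq_top_of_finrank_eq (by rw [hrank, hV]; omega)
        · refine ⟨⊤, ⟨fun h => absurd h h1, fun h => absurd h h2, fun _ => le_top,
            fun h => absurd h h3, fun _ => rfl⟩, le_top⟩
  choose stepf stepspec using step
  let caux : ∀ a : ℕ, {s : Submodule F V // Inv a s} :=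
    fun a => Nat.rec (motive := fun a => {s : Submodule F V // Inv a s}) ⟨⊥, base⟩
      (fun a ih => ⟨stepf a ih.1 ih.2, (stepspec a ih.1 ih.2).1⟩) a
  have hsucc : ∀ a, (caux a).1 ≤ (caux (a + 1)).1 :=
    fun a => (stepspec a (caux a).1 (caux a).2).2
  refine ⟨fun a => (caux a).1, monotone_nat_of_le_succ hsucc,
    fun a ha => (caux a).2.2.2.2.1 ha, ?_, ?_,
    fun a ha => (caux a).2.1 ha, fun a ha => (caux a).2.2.2.1 ha⟩
  · exact Submodule.eq_of_le_of_finrank_le ((caux k).2.1 le_rfl)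
      (by rw [hU, (caux k).2.2.2.2.1 (by omega)])
  · exact le_antisymm ((caux (n - k)).2.2.1 le_rfl) ((caux (n - k)).2.2.2.1 le_rfl)

theorem stmt_14 {F : Type*} [Field F] [Fintype F] (q n k r : ℕ)
    (hq : Fintype.card F = q) (hn : 0 < n) (hk : 0 < k) (hnk : 2 * k ≤ n)
    (A : Finset ℕ)
    (hA : A ⊆ Finset.Icc 1 k ∪ Finset.Icc (n - k) (n - 1))
    (hAk : k ∈ A ∨ n - k ∈ A)
    (hr : n % k = r) (hrk : r < k) :
    ∃ C : Set (A → Submodule F (Fin n → F)), IsODFC n A C ∧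
      (C.ncard : ℝ) =
        ((q : ℝ) ^ n - (q : ℝ) ^ (k + r)) / ((q : ℝ) ^ k - 1) + 1 := by
  classical
  subst hq
  set q := Fintype.card F with hqdef
  have hq2 : 2 ≤ q := Fintype.one_lt_card
  have hVrank : finrank F (Fin n → F) = n := Module.finrank_fin_fun F
  have hdivmod : k * (n / k) + r = n := by rw [← hr]; exact Nat.div_add_mod n k
  have hdiv2 : 2 ≤ n / k := (Nat.le_div_iff_mul_le hk).mpr (by omega)
  set t : ℕ := n / k - 1 with ht
  have htk : t * k = k * (n / k) - k := by rw [ht, Nat.sub_mul, one_mul, Nat.mul_comm]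
  have hk2 : 2 * k ≤ k * (n / k) := by
    calc 2 * k = k * 2 := by ring
    _ ≤ k * (n / k) := Nat.mul_le_mul_left k hdiv2
  have htn : k + r + t * k = n := by omega
  obtain ⟨Pfam, Uinf, Z, hcount, hmem, hpair, hUrank, hUinf, hZrank, hUZ, hZsup⟩ :=
    exists_fam F k r hk hrk t (Fin n → F) (by rw [hVrank]; omega)
  rw [htn, ← hqdef] at hcount
  have hUZle : Uinf ≤ Z := hUZ (by omega)
  have hUne : Uinf ≠ ⊥ := by
    intro h; rw [h, finrank_bot] at hUrank; omega
  have hnotin : (Uinf, Z) ∉ Pfam := by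
    intro hmem'
    have h := hUinf _ hmem'
    have h' : Uinf ⊓ Uinf = ⊥ := h
    rw [inf_idem] at h'
    exact hUne h'
  set Ptot := insert (Uinf, Z) Pfam with hPtot
  have hcard : Ptot.card = Pfam.card + 1 := Finset.card_insert_of_notMem hnotin
  have hmemT : ∀ p ∈ Ptot, finrank F p.1 = k ∧ finrank F p.2 = n - k ∧ p.1 ≤ p.2 := by
    intro p hp
    rcases Finset.mem_insert.mp hp with rfl | hp
    · exact ⟨hUrank, by rw [hZrank]; omega, hUZle⟩
    · obtain ⟨h1, h2, h3⟩ := hmem p hp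
      exact ⟨h1, by rw [h2]; omega, h3⟩
  have hpairT : ∀ p ∈ Ptot, ∀ p' ∈ Ptot, p ≠ p' → p.1 ⊓ p'.1 = ⊥ ∧ p.2 ⊔ p'.2 = ⊤ := by
    intro p hp p' hp' hne
    rcases Finset.mem_insert.mp hp with rfl | hp <;>
      rcases Finset.mem_insert.mp hp' with rfl | hp'
    · exact absurd rfl hne
    · exact ⟨hUinf p' hp', hZsup p' hp'⟩
    · exact ⟨by rw [inf_comm]; exact hUinf p hp, by rw [sup_comm]; exact hZsup p hp⟩
    · exact hpair p hp p' hp' hne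
  have hchains : ∀ p : Submodule F (Fin n → F) × Submodule F (Fin n → F), p ∈ Ptot →
      ∃ c : ℕ → Submodule F (Fin n → F), Monotone c ∧
      (∀ a, a ≤ n → finrank F (c a) = a) ∧ c k = p.1 ∧ c (n - k) = p.2 ∧
      (∀ a, a ≤ k → c a ≤ p.1) ∧ (∀ a, n - k ≤ a → p.2 ≤ c a) := by
    intro p hp
    obtain ⟨h1, h2, h3⟩ := hmemT p hp
    exact exists_chain hk hnk hVrank h1 h2 h3
  choose ch hmono hdim hck hcnk hlow hhigh using hchains
  set flagOf : {p // p ∈ Ptot} → (A → Submodule F (Fin n → F)) :=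
    fun x a => ch x.1 x.2 (a : ℕ) with hflagOf
  have hAprop : ∀ a : ℕ, a ∈ A → 1 ≤ a ∧ a ≤ n - 1 ∧ (a ≤ k ∨ n - k ≤ a) := by
    intro a ha
    have h := hA ha
    rw [Finset.mem_union, Finset.mem_Icc, Finset.mem_Icc] at h
    omega
  have hflag : ∀ x : {p // p ∈ Ptot}, IsFlagOfSet n A (flagOf x) := by
    intro x
    constructor
    · intro a
      have := hAprop a a.2
      exact hdim x.1 x.2 (a : ℕ) (by omega)
    · intro a b hab
      have hle : flagOf x a ≤ flagOf x b := hmono x.1 x.2 (le_of_lt hab)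
      refine lt_of_le_of_ne hle (fun h => ?_)
      have h1 := hdim x.1 x.2 (a : ℕ) (by have := hAprop a a.2; omega)
      have h2 := hdim x.1 x.2 (b : ℕ) (by have := hAprop b b.2; omega)
      have h' : ch x.1 x.2 (a : ℕ) = ch x.1 x.2 (b : ℕ) := h
      rw [h'] at h1
      omega
  have hUne2 : ∀ x y : {p // p ∈ Ptot}, x ≠ y → x.1 ≠ y.1 :=
    fun x y hxy h => hxy (Subtype.ext h)
  have hfst : ∀ x y : {p // p ∈ Ptot}, x.1.1 = y.1.1 → x = y := by
    intro x y h
    by_contra hxy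
    have hne := hUne2 x y hxy
    have h2 := (hpairT x.1 x.2 y.1 y.2 hne).1
    rw [h, inf_idem] at h2
    have h3 := (hmemT y.1 y.2).1
    rw [h2, finrank_bot] at h3
    omega
  have hsnd : ∀ x y : {p // p ∈ Ptot}, x.1.2 = y.1.2 → x = y := by
    intro x y h
    by_contra hxy
    have hne := hUne2 x y hxy
    have h2 := (hpairT x.1 x.2 y.1 y.2 hne).2
    rw [h, sup_idem] at h2
    have h3 := (hmemT y.1 y.2).2.1
    rw [h2, finrank_top, hVrank] at h3
    omega
  have hinj : Function.Injective flagOf := by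
    intro x y h
    rcases hAk with hka | hka
    · have h1 : ch x.1 x.2 k = ch y.1 y.2 k := congrFun h (⟨k, hka⟩ : A)
      rw [hck x.1 x.2, hck y.1 y.2] at h1
      exact hfst x y h1
    · have h1 : ch x.1 x.2 (n - k) = ch y.1 y.2 (n - k) := congrFun h (⟨n - k, hka⟩ : A)
      rw [hcnk x.1 x.2, hcnk y.1 y.2] at h1
      exact hsnd x y h1
  have hdist : ∀ x y : {p // p ∈ Ptot}, x ≠ y →
      flagDistSet (flagOf x) (flagOf y) = 2 * ((∑ a ∈ A.filter (fun a => a ≤ n / 2), a) +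
        ∑ a ∈ A.filter (fun a => n / 2 < a), (n - a)) := by
    intro x y hxy
    have hne := hUne2 x y hxy
    obtain ⟨hbot, htop⟩ := hpairT x.1 x.2 y.1 y.2 hne
    have hper : ∀ a : ℕ, a ∈ A → subDist (ch x.1 x.2 a) (ch y.1 y.2 a)
        = if a ≤ k then 2 * a else 2 * (n - a) := by
      intro a ha
      obtain ⟨ha1, ha2, ha3⟩ := hAprop a ha
      have hdx := hdim x.1 x.2 a (by omega)
      have hdy := hdim y.1 y.2 a (by omega)
      by_cases hak : a ≤ k
      · have hinf : ch x.1 x.2 a ⊓ ch y.1 y.2 a = ⊥ := by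
          rw [eq_bot_iff, ← hbot]
          exact inf_le_inf (hlow x.1 x.2 a hak) (hlow y.1 y.2 a hak)
        rw [if_pos hak, subDist, hinf, finrank_bot, hdx, hdy]
        omega
      · have hank : n - k ≤ a := by omega
        have hsup : ch x.1 x.2 a ⊔ ch y.1 y.2 a = ⊤ := by
          rw [eq_top_iff, ← htop]
          exact sup_le_sup (hhigh x.1 x.2 a hank) (hhigh y.1 y.2 a hank)
        have heq := Submodule.finrank_sup_add_finrank_inf_eq (ch x.1 x.2 a) (ch y.1 y.2 a)
        rw [hsup, finrank_top, hVrank, hdx, hdy] at heq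
        rw [if_neg hak, subDist, hdx, hdy]
        omega
    have hsum : flagDistSet (flagOf x) (flagOf y)
        = ∑ a ∈ A, (if a ≤ k then 2 * a else 2 * (n - a)) := by
      simp only [flagDistSet]
      rw [← Finset.sum_coe_sort A (fun a => if a ≤ k then 2 * a else 2 * (n - a))]
      exact Finset.sum_congr rfl (fun a _ => hper (a : ℕ) a.2)
    rw [hsum]
    have hf1 : A.filter (fun a => a ≤ n / 2) = A.filter (fun a => a ≤ k) := by
      apply Finset.filter_congr
      intro a ha
      have := hAprop a ha
      constructor <;> intro <;> omega
    have hf2 : A.filter (fun a => n / 2 < a) = A.filter (fun a => ¬ a ≤ k) := by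
      apply Finset.filter_congr
      intro a ha
      have := hAprop a ha
      constructor <;> intro <;> omega
    rw [hf1, hf2]
    rw [← Finset.sum_filter_add_sum_filter_not A (fun a => a ≤ k)
      (fun a => if a ≤ k then 2 * a else 2 * (n - a))]
    have hs1 : ∑ a ∈ A.filter (fun a => a ≤ k), (if a ≤ k then 2 * a else 2 * (n - a))
        = ∑ a ∈ A.filter (fun a => a ≤ k), 2 * a := by
      apply Finset.sum_congr rfl
      intro a ha
      rw [if_pos (Finset.mem_filter.mp ha).2]
    have hs2 : ∑ a ∈ A.filter (fun a => ¬ a ≤ k), (if a ≤ k then 2 * a else 2 * (n - a))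
        = ∑ a ∈ A.filter (fun a => ¬ a ≤ k), 2 * (n - a) := by
      apply Finset.sum_congr rfl
      intro a ha
      rw [if_neg (Finset.mem_filter.mp ha).2]
    rw [hs1, hs2, ← Finset.mul_sum, ← Finset.mul_sum, Nat.mul_add]
  set C : Set (A → Submodule F (Fin n → F)) := ↑(Ptot.attach.image flagOf) with hC
  have hCmem : ∀ f, f ∈ C ↔ ∃ x : {p // p ∈ Ptot}, flagOf x = f := by
    intro f
    rw [hC]
    constructor
    · intro hf
      rw [Finset.mem_coe, Finset.mem_image] at hf
      obtain ⟨x, -, h⟩ := hf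
      exact ⟨x, h⟩
    · rintro ⟨x, rfl⟩
      rw [Finset.mem_coe, Finset.mem_image]
      exact ⟨x, Finset.mem_attach _ _, rfl⟩
  have hPfamne : Pfam.Nonempty := by
    rw [← Finset.card_pos]
    by_contra hh
    have hc0 : Pfam.card = 0 := by omega
    rw [hc0, zero_mul, zero_add] at hcount
    have := Nat.pow_right_injective hq2 hcount
    omega
  obtain ⟨p0, hp0⟩ := hPfamne
  have hp0T : p0 ∈ Ptot := Finset.mem_insert_of_mem hp0
  have hizT : (Uinf, Z) ∈ Ptot := Finset.mem_insert_self _ _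
  have hxyne : (⟨(Uinf, Z), hizT⟩ : {p // p ∈ Ptot}) ≠ ⟨p0, hp0T⟩ := by
    intro h
    apply hnotin
    have h2 : (Uinf, Z) = p0 := Subtype.ext_iff.mp h
    rw [← h2] at hp0
    exact hp0
  have hS : {dd | ∃ f ∈ C, ∃ f' ∈ C, f ≠ f' ∧ dd = flagDistSet f f'}
      = {2 * ((∑ a ∈ A.filter (fun a => a ≤ n / 2), a) +
        ∑ a ∈ A.filter (fun a => n / 2 < a), (n - a))} := by
    ext dd
    simp only [Set.mem_setOf_eq, Set.mem_singleton_iff]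
    constructor
    · rintro ⟨f, hf, f', hf', hne, rfl⟩
      obtain ⟨x, rfl⟩ := (hCmem f).mp hf
      obtain ⟨y, rfl⟩ := (hCmem f').mp hf'
      exact hdist x y (fun h => hne (by rw [h]))
    · rintro rfl
      refine ⟨flagOf ⟨(Uinf, Z), hizT⟩, (hCmem _).mpr ⟨_, rfl⟩,
        flagOf ⟨p0, hp0T⟩, (hCmem _).mpr ⟨_, rfl⟩, ?_, (hdist _ _ hxyne).symm⟩
      intro h
      exact hxyne (hinj h)
  refine ⟨C, ⟨?_, ?_, ?_⟩, ?_⟩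
  · exact ⟨flagOf ⟨(Uinf, Z), hizT⟩, (hCmem _).mpr ⟨_, rfl⟩⟩
  · intro f hf
    obtain ⟨x, rfl⟩ := (hCmem f).mp hf
    exact hflag x
  · simp only [minFlagDistSet]
    rw [hS]
    exact csInf_singleton _
  · have hle : q ^ (k + r) ≤ q ^ n := Nat.pow_le_pow_right (by omega) (by omega)
    have hcount' : Pfam.card * (q ^ k - 1) = q ^ n - q ^ (k + r) := by omega
    have hCn : C.ncard = Pfam.card + 1 := by
      rw [hC, Set.ncard_coe_finset, Finset.card_image_of_injective _ hinj,
        Finset.card_attach, hcard]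
    rw [hCn]
    have h1 : (Pfam.card : ℝ) * ((q : ℝ) ^ k - 1) = (q : ℝ) ^ n - (q : ℝ) ^ (k + r) := by
      have h2 : ((Pfam.card * (q ^ k - 1) : ℕ) : ℝ) = ((q ^ n - q ^ (k + r) : ℕ) : ℝ) := by
        rw [hcount']
      rwa [Nat.cast_mul, Nat.cast_sub (Nat.one_le_pow _ _ (by omega)),
        Nat.cast_sub hle, Nat.cast_pow, Nat.cast_pow, Nat.cast_pow, Nat.cast_one] at h2
    have hne0 : ((q : ℝ) ^ k - 1) ≠ 0 := by
      have h3 : (1 : ℕ) < q ^ k := Nat.one_lt_pow (by omega) (by omega)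
      have h4 : (1 : ℝ) < (q : ℝ) ^ k := by exact_mod_cast h3
      exact sub_ne_zero.mpr (ne_of_gt h4)
    have h5 : (Pfam.card : ℝ) = ((q : ℝ) ^ n - (q : ℝ) ^ (k + r)) / ((q : ℝ) ^ k - 1) := by
      rw [eq_div_iff hne0]
      exact h1
    push_cast
    rw [h5]
end
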